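/- arXiv:1708.03393 — 7 statements merged into one kernel-verified Lean document; each statement's English description precedes it below -/
import Mathlib

section
/- Let R be a unique factorization domain with fraction field L, and let f₁ ∈ R[x₁] and f₂ ∈ R[x₂] be monic polynomials of positive degree. Set T = R[x₁,x₂]/(f₁(x₁), f₂(x₂)), E = L[x₁]/(f₁), and F = E[x₂]/(f₂). Then T is an integral domain if and only if both E and F are fields; that is, if and only if f₁ is irreducible in L[x₁] and f₂ is irreducible in E[x₂]. -/
/-!
`T` is the tower `(R[x₁]/(f₁))[x₂]/(f₂)`, free over `R` on the monomials `x₁^i x₂^j`, and the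
same monomials form an `L`-basis of `F`. So the natural map `T → F` is injective and every
element of `F` has a nonzero `R`-multiple in its image; hence `T` is a domain iff `F` is.
As `F` is finite-dimensional over `L`, this happens iff `F` is a field, and then so is its
subring `E`, over which `F` is free. Finally `K[X]/(p)` is a field iff `p` is irreducible.
-/

open Polynomial

noncomputable section

/-- `T = R[x₁,x₂]/(f₁(x₁), f₂(x₂))`. -/
abbrev Tring (R : Type) [CommRing R] (f₁ f₂ : R[X]) : Type :=
  MvPolynomial (Fin 2) R ⧸
    (Ideal.span {Polynomial.aeval (MvPolynomial.X 0) f₁,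
      Polynomial.aeval (MvPolynomial.X 1) f₂} : Ideal (MvPolynomial (Fin 2) R))

/-- `f₁` viewed in `L[x₁]`. -/
abbrev f₁L (R L : Type) [CommRing R] [Field L] [Algebra R L] (f₁ : R[X]) : L[X] :=
  f₁.map (algebraMap R L)

/-- `E = L[x₁]/(f₁)`. -/
abbrev Ering (R L : Type) [CommRing R] [Field L] [Algebra R L] (f₁ : R[X]) : Type :=
  L[X] ⧸ (Ideal.span {f₁L R L f₁} : Ideal L[X])

/-- The canonical map `R → E`. -/
abbrev toE (R L : Type) [CommRing R] [Field L] [Algebra R L] (f₁ : R[X]) :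
    R →+* Ering R L f₁ :=
  (Ideal.Quotient.mk _).comp ((Polynomial.C : L →+* L[X]).comp (algebraMap R L))

/-- `f₂` viewed in `E[x₂]`. -/
abbrev f₂E (R L : Type) [CommRing R] [Field L] [Algebra R L] (f₁ f₂ : R[X]) :
    (Ering R L f₁)[X] :=
  f₂.map (toE R L f₁)

/-- `F = E[x₂]/(f₂)`. -/
abbrev Fring (R L : Type) [CommRing R] [Field L] [Algebra R L] (f₁ f₂ : R[X]) : Type :=
  (Ering R L f₁)[X] ⧸ (Ideal.span {f₂E R L f₁ f₂} : Ideal (Ering R L f₁)[X])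

instance Ering.instCommRing (R L : Type) [CommRing R] [Field L] [Algebra R L] (f₁ : R[X]) :
    CommRing (Ering R L f₁) :=
  Ideal.Quotient.commRing _


open AdjoinRoot

section BasisTransfer

variable {R L S F ι : Type*} [CommRing R] [Field L] [Algebra R L] [IsFractionRing R L]
  [CommRing S] [Algebra R S] [CommRing F] [Algebra L F] [Algebra R F] [IsScalarTower R L F]
  {ψ : S →ₐ[R] F} {b : Module.Basis ι R S} {c : Module.Basis ι L F}

theorem AlgHom.injective_of_apply_basis (hψ : ∀ i, ψ (b i) = c i) : Function.Injective ψ := by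
  have hli : LinearIndependent R (ψ.toLinearMap ∘ b) := by
    convert c.linearIndependent.restrict_scalars' R
    exact funext hψ
  exact LinearMap.injective_of_linearIndependent b.span_eq hli

theorem AlgHom.exists_smul_eq_of_apply_basis [Fintype ι] (hψ : ∀ i, ψ (b i) = c i) (z : F) :
    ∃ r ∈ nonZeroDivisors R, ∃ t : S, r • z = ψ t := by
  obtain ⟨d, hd⟩ := IsLocalization.exist_integer_multiples_of_finite (nonZeroDivisors R) (c.repr z)
  choose a ha using hd
  refine ⟨d, d.2, ∑ i, a i • b i, ?_⟩
  conv_lhs => rw [← c.sum_repr z]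
  simp only [Finset.smul_sum, map_sum, map_smul, hψ]
  refine Finset.sum_congr rfl fun i _ => ?_
  rw [← algebraMap_smul L (a i), ha i, smul_assoc]

theorem AlgHom.isDomain_iff_of_apply_basis [Nontrivial R] [Fintype ι] (hψ : ∀ i, ψ (b i) = c i) :
    IsDomain S ↔ IsDomain F := by
  have hinj := ψ.injective_of_apply_basis hψ
  refine ⟨fun _ => ?_, fun _ => hinj.isDomain ψ.toRingHom⟩
  have : Nontrivial F := hinj.nontrivial
  have eq_zero_of_smul_eq_zero {r : R} (hr : r ∈ nonZeroDivisors R) {x : F} (hx : r • x = 0) :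
      x = 0 := by
    rw [← algebraMap_smul L] at hx
    exact (smul_eq_zero.mp hx).resolve_left
      (IsLocalization.to_map_ne_zero_of_mem_nonZeroDivisors L le_rfl hr)
  refine @NoZeroDivisors.to_isDomain _ _ _ ⟨fun {z w} hzw => ?_⟩
  obtain ⟨r, hr, t, ht⟩ := ψ.exists_smul_eq_of_apply_basis hψ z
  obtain ⟨r', hr', t', ht'⟩ := ψ.exists_smul_eq_of_apply_basis hψ w
  have htt' : t * t' = 0 :=
    hinj (by rw [map_mul, ← ht, ← ht', smul_mul_smul_comm, hzw, smul_zero, map_zero])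
  rcases mul_eq_zero.mp htt' with rfl | rfl
  · exact .inl (eq_zero_of_smul_eq_zero hr (by rw [ht, map_zero]))
  · exact .inr (eq_zero_of_smul_eq_zero hr' (by rw [ht', map_zero]))

end BasisTransfer

theorem isField_quotient_span_singleton_iff {K : Type*} [Field K] {p : K[X]} (hp : p ≠ 0) :
    IsField (K[X] ⧸ Ideal.span {p}) ↔ Irreducible p :=
  (Ideal.Quotient.maximal_ideal_iff_isField_quotient _).symm.trans
    (Ideal.irreducible_iff_isMaximal_span_singleton hp).symm

theorem isField_iff_isDomain_of_finite {K A : Type*} [Field K] [CommRing A] [Algebra K A]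
    [Module.Finite K A] : IsField A ↔ IsDomain A :=
  ⟨fun h => (h.toField).isDomain, fun _ => isField_of_isIntegral_of_isField' (Field.toIsField K)⟩

theorem Polynomial.Monic.isField_of_isField_adjoinRoot {K : Type*} [CommRing K] {g : K[X]}
    (hg : g.Monic) (h : IsField (AdjoinRoot g)) : IsField K := by
  have := hg.free_adjoinRoot
  have := hg.finite_adjoinRoot
  have := h.nontrivial
  exact isField_of_isIntegral_of_isField (FaithfulSMul.algebraMap_injective K _) h

section TowerBasis

variable {K : Type*} [CommRing K] {f : K[X]} (hf : f.Monic) {m : ℕ} (hm : f.natDegree = m)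
  {g : (AdjoinRoot f)[X]} (hg : g.Monic) {n : ℕ} (hn : g.natDegree = n)

def AdjoinRoot.towerBasis : Module.Basis (Fin m × Fin n) K (AdjoinRoot g) :=
  ((powerBasis' hf).basis.smulTower (powerBasis' hg).basis).reindex
    ((finCongr ((powerBasis'_dim hf).trans hm)).prodCongr
      (finCongr ((powerBasis'_dim hg).trans hn)))

theorem AdjoinRoot.towerBasis_apply (i : Fin m) (j : Fin n) :
    towerBasis hf hm hg hn (i, j) = of g (root f ^ (i : ℕ)) * root g ^ (j : ℕ) := by
  simp [towerBasis, Algebra.smul_def, AdjoinRoot.algebraMap_eq]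

end TowerBasis

theorem AdjoinRoot.aeval_root_map {R K : Type*} [CommRing R] [CommRing K] [Algebra R K]
    (p : R[X]) : aeval (root (p.map (algebraMap R K))) p = 0 := by
  rw [aeval_eq_of_algebra, mk_self]

section BaseChange

variable {R : Type*} [CommRing R]

abbrev AdjoinRootTower {K : Type*} [CommRing K] [Algebra R K] (f₁ : K[X]) (f₂ : R[X]) :=
  AdjoinRoot (f₂.map (algebraMap R (AdjoinRoot f₁)))

variable (L : Type*) [Field L] [Algebra R L] (f₁ f₂ : R[X])

def AdjoinRoot.baseChange : AdjoinRoot f₁ →ₐ[R] AdjoinRoot (f₁.map (algebraMap R L)) :=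
  liftAlgHom f₁ (Algebra.ofId R _) (root _) (aeval_root_map f₁)

def AdjoinRootTower.baseChange :
    AdjoinRootTower f₁ f₂ →ₐ[R] AdjoinRootTower (f₁.map (algebraMap R L)) f₂ :=
  liftAlgHom _ ((ofAlgHom R _).comp (AdjoinRoot.baseChange L f₁)) (root _) <| by
    rw [eval₂_map, AlgHom.comp_algebraMap]
    exact aeval_root_map f₂

@[simp]
theorem AdjoinRoot.baseChange_root : baseChange L f₁ (root f₁) = root _ :=
  liftAlgHom_root ..

@[simp]
theorem AdjoinRootTower.baseChange_of (x : AdjoinRoot f₁) :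
    baseChange L f₁ f₂ (of _ x) = of _ (AdjoinRoot.baseChange L f₁ x) :=
  liftAlgHom_of ..

@[simp]
theorem AdjoinRootTower.baseChange_root : baseChange L f₁ f₂ (root _) = root _ :=
  liftAlgHom_root ..

variable {f₁ f₂}

theorem natDegree_map_algebraMap_adjoinRoot {K : Type*} [CommRing K] [IsDomain K] [Algebra R K]
    {f₁ : K[X]} {f₂ : R[X]} (h₂m : f₂.Monic) (h₁d : 0 < f₁.natDegree) :
    (f₂.map (algebraMap R (AdjoinRoot f₁))).natDegree = f₂.natDegree := by
  have := AdjoinRoot.nontrivial f₁ (natDegree_pos_iff_degree_pos.mp h₁d).ne'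
  exact h₂m.natDegree_map _

theorem AdjoinRootTower.baseChange_towerBasis (h₁m : f₁.Monic) (h₂m : f₂.Monic)
    {n : ℕ} (hn : (f₂.map (algebraMap R (AdjoinRoot f₁))).natDegree = n)
    (hn' : (f₂.map (algebraMap R (AdjoinRoot (f₁.map (algebraMap R L))))).natDegree = n)
    (i : Fin f₁.natDegree) (j : Fin n) :
    baseChange L f₁ f₂ (towerBasis h₁m rfl (h₂m.map _) hn (i, j)) =
      towerBasis (h₁m.map (algebraMap R L)) (h₁m.natDegree_map _) (h₂m.map _) hn' (i, j) := by
  simp only [towerBasis_apply, map_mul, map_pow, baseChange_of, baseChange_root,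
    AdjoinRoot.baseChange_root]

theorem AdjoinRootTower.isDomain_iff_isField_baseChange [IsDomain R] [IsFractionRing R L]
    (h₁m : f₁.Monic) (h₂m : f₂.Monic) (h₁d : 0 < f₁.natDegree) :
    IsDomain (AdjoinRootTower f₁ f₂) ↔
      IsField (AdjoinRootTower (f₁.map (algebraMap R L)) f₂) := by
  have hn := natDegree_map_algebraMap_adjoinRoot h₂m h₁d
  have hn' := natDegree_map_algebraMap_adjoinRoot (R := R) (f₁ := f₁.map (algebraMap R L)) h₂m
    (by rwa [h₁m.natDegree_map])
  let c := towerBasis (h₁m.map (algebraMap R L)) (h₁m.natDegree_map _) (h₂m.map _) hn'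
  have : Module.Finite L (AdjoinRootTower (f₁.map (algebraMap R L)) f₂) := .of_basis c
  have key := baseChange_towerBasis L h₁m h₂m hn hn'
  rw [isField_iff_isDomain_of_finite (K := L)]
  exact (baseChange L f₁ f₂).isDomain_iff_of_apply_basis fun (p : Fin _ × Fin _) => key p.1 p.2

end BaseChange

theorem AdjoinRoot.aeval_algebraMap_root {R A : Type*} [CommRing R] [CommRing A] [Algebra R A]
    (f : R[X]) [Algebra (AdjoinRoot f) A] [IsScalarTower R (AdjoinRoot f) A] :
    aeval (algebraMap (AdjoinRoot f) A (root f)) f = 0 := by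
  rw [aeval_algebraMap_apply, aeval_eq, mk_self, map_zero]

section Presentation

variable {R : Type} [CommRing R] (f₁ f₂ : R[X])

theorem Tring.eq_zero_of_mem_ideal {B : Type*} [CommRing B] [Algebra R B]
    (φ : MvPolynomial (Fin 2) R →ₐ[R] B) (h₁ : aeval (φ (.X 0)) f₁ = 0)
    (h₂ : aeval (φ (.X 1)) f₂ = 0) :
    ∀ a ∈ Ideal.span {aeval (MvPolynomial.X 0) f₁, aeval (MvPolynomial.X 1) f₂}, φ a = 0 := by
  suffices Ideal.span {aeval (MvPolynomial.X 0) f₁, aeval (MvPolynomial.X 1) f₂} ≤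
      RingHom.ker φ from fun a ha => this ha
  rw [Ideal.span_le, Set.insert_subset_iff, Set.singleton_subset_iff]
  simp only [SetLike.mem_coe, RingHom.mem_ker, ← aeval_algHom_apply]
  exact ⟨h₁, h₂⟩

def Tring.toAdjoinRootTower : Tring R f₁ f₂ →ₐ[R] AdjoinRootTower f₁ f₂ :=
  Ideal.Quotient.liftₐ _ (MvPolynomial.aeval ![algebraMap _ _ (root f₁), root _]) <|
    eq_zero_of_mem_ideal f₁ f₂ _
      (by rw [MvPolynomial.aeval_X]; exact aeval_algebraMap_root f₁)
      (by rw [MvPolynomial.aeval_X]; exact aeval_root_map f₂)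

theorem Tring.aeval_mk_X₀ : aeval (Ideal.Quotient.mk _ (.X 0) : Tring R f₁ f₂) f₁ = 0 := by
  rw [← Ideal.Quotient.mkₐ_eq_mk R, aeval_algHom_apply, Ideal.Quotient.mkₐ_eq_mk,
    Ideal.Quotient.eq_zero_iff_mem]
  exact Ideal.subset_span (.inl rfl)

theorem Tring.aeval_mk_X₁ : aeval (Ideal.Quotient.mk _ (.X 1) : Tring R f₁ f₂) f₂ = 0 := by
  rw [← Ideal.Quotient.mkₐ_eq_mk R, aeval_algHom_apply, Ideal.Quotient.mkₐ_eq_mk,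
    Ideal.Quotient.eq_zero_iff_mem]
  exact Ideal.subset_span (.inr rfl)

def AdjoinRootTower.toTring : AdjoinRootTower f₁ f₂ →ₐ[R] Tring R f₁ f₂ :=
  liftAlgHom _ (liftAlgHom f₁ (Algebra.ofId R _) _ <| by
      rw [Algebra.toRingHom_ofId, ← aeval_def]
      exact Tring.aeval_mk_X₀ f₁ f₂)
    (Ideal.Quotient.mk _ (.X 1)) <| by
      rw [eval₂_map, AlgHom.comp_algebraMap, ← aeval_def]
      exact Tring.aeval_mk_X₁ f₁ f₂

theorem Tring.toAdjoinRootTower_mk_X₀ :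
    toAdjoinRootTower f₁ f₂ (Ideal.Quotient.mk _ (.X 0)) = algebraMap _ _ (root f₁) :=
  MvPolynomial.aeval_X _ _

theorem Tring.toAdjoinRootTower_mk_X₁ :
    toAdjoinRootTower f₁ f₂ (Ideal.Quotient.mk _ (.X 1)) = root _ :=
  MvPolynomial.aeval_X _ _

theorem AdjoinRootTower.toTring_algebraMap_root :
    toTring f₁ f₂ (algebraMap _ _ (root f₁)) = Ideal.Quotient.mk _ (.X 0) := by
  change toTring f₁ f₂ (of _ (root f₁)) = _
  rw [toTring, liftAlgHom_of, liftAlgHom_root]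

theorem AdjoinRootTower.toTring_root : toTring f₁ f₂ (root _) = Ideal.Quotient.mk _ (.X 1) :=
  liftAlgHom_root ..

def Tring.equivAdjoinRootTower : Tring R f₁ f₂ ≃ₐ[R] AdjoinRootTower f₁ f₂ :=
  .ofAlgHom (toAdjoinRootTower f₁ f₂) (AdjoinRootTower.toTring f₁ f₂)
    (algHom_ext' (algHom_ext <| by
        simp only [AlgHom.comp_apply, AlgHom.id_apply, coe_ofAlgHom]
        rw [← AdjoinRoot.algebraMap_eq, AdjoinRootTower.toTring_algebraMap_root,
          toAdjoinRootTower_mk_X₀])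
      (by
        simp only [AlgHom.comp_apply, AlgHom.id_apply]
        rw [AdjoinRootTower.toTring_root, toAdjoinRootTower_mk_X₁]))
    (Ideal.Quotient.algHom_ext R <| MvPolynomial.algHom_ext <| Fin.forall_fin_two.mpr
      ⟨by simp only [AlgHom.comp_apply, AlgHom.id_apply, Ideal.Quotient.mkₐ_eq_mk,
          toAdjoinRootTower_mk_X₀, AdjoinRootTower.toTring_algebraMap_root],
        by simp only [AlgHom.comp_apply, AlgHom.id_apply, Ideal.Quotient.mkₐ_eq_mk,
          toAdjoinRootTower_mk_X₁, AdjoinRootTower.toTring_root]⟩)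

end Presentation

theorem stmt0_general (R L : Type) [CommRing R] [IsDomain R]
    [Field L] [Algebra R L] [IsFractionRing R L]
    (f₁ f₂ : R[X]) (h₁m : f₁.Monic) (h₂m : f₂.Monic)
    (h₁d : 0 < f₁.natDegree) :
    (IsDomain (Tring R f₁ f₂) ↔ (IsField (Ering R L f₁) ∧ IsField (Fring R L f₁ f₂))) ∧
    (IsDomain (Tring R f₁ f₂) ↔
      (Irreducible (f₁L R L f₁) ∧ Irreducible (f₂E R L f₁ f₂))) := by
  have hT : IsDomain (Tring R f₁ f₂) ↔ IsField (Fring R L f₁ f₂) :=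
    (Tring.equivAdjoinRootTower f₁ f₂).toMulEquiv.isDomain_iff.trans
      (AdjoinRootTower.isDomain_iff_isField_baseChange L h₁m h₂m h₁d)
  have hE : IsField (Fring R L f₁ f₂) → IsField (Ering R L f₁) :=
    (h₂m.map _).isField_of_isField_adjoinRoot
  have hE_iff : IsField (Ering R L f₁) ↔ Irreducible (f₁L R L f₁) :=
    isField_quotient_span_singleton_iff (h₁m.map _).ne_zero
  have hF_iff (h : IsField (Ering R L f₁)) :
      IsField (Fring R L f₁ f₂) ↔ Irreducible (f₂E R L f₁ f₂) :=
    letI := h.toField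
    isField_quotient_span_singleton_iff (h₂m.map _).ne_zero
  refine ⟨hT.trans ⟨fun h => ⟨hE h, h⟩, And.right⟩, hT.trans ⟨fun h => ?_, fun ⟨h₁, h₂⟩ => ?_⟩⟩
  · exact ⟨hE_iff.mp (hE h), (hF_iff (hE h)).mp h⟩
  · exact (hF_iff (hE_iff.mpr h₁)).mpr h₂

/-- **Domain criterion.** Let `R` be a UFD with fraction field `L`, and let
`f₁ ∈ R[x₁]`, `f₂ ∈ R[x₂]` be monic of positive degree.  Set
`T = R[x₁,x₂]/(f₁(x₁), f₂(x₂))`, `E = L[x₁]/(f₁)` and `F = E[x₂]/(f₂)`.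
Then `T` is an integral domain iff `E` and `F` are both fields, that is,
iff `f₁` is irreducible in `L[x₁]` and `f₂` is irreducible in `E[x₂]`. -/
theorem stmt0 (R L : Type) [CommRing R] [IsDomain R] [UniqueFactorizationMonoid R]
    [Field L] [Algebra R L] [IsFractionRing R L]
    (f₁ f₂ : R[X]) (h₁m : f₁.Monic) (h₂m : f₂.Monic)
    (h₁d : 0 < f₁.natDegree) (h₂d : 0 < f₂.natDegree) :
    (IsDomain (Tring R f₁ f₂) ↔ (IsField (Ering R L f₁) ∧ IsField (Fring R L f₁ f₂))) ∧
    (IsDomain (Tring R f₁ f₂) ↔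
      (Irreducible (f₁L R L f₁) ∧ Irreducible (f₂E R L f₁ f₂))) :=
  stmt0_general R L f₁ f₂ h₁m h₂m h₁d
end
end

section
/- Let R be a unique factorization domain whose fraction field L has characteristic different from two. Let a₁, a₂ ∈ R and suppose the polynomials fᵢ = xᵢ² − aᵢ are irreducible in L[xᵢ] for i = 1,2. If T = R[x₁,x₂]/(f₁, f₂) is not an integral domain, then there exist nonzero elements c, d, u ∈ R with a₁ = d²u and a₂ = c²u, where c and d are relatively prime (their only common divisors are units). -/
/-!
If `a₂ / a₁` is not a square in `L`, then `X² − a₂` stays irreducible over `K = L(√a₁)`: a square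
root of `a₂` in `K` has the form `x + y√a₁` with `2xy = 0`, so it is `x` or `y√a₁`. Hence `T` maps
to the field `K(√a₂)`, injectively, because `T` is spanned over `R` by `1, x₁, x₂, x₁x₂`, whose
images are linearly independent over `L`. So if `T` is not a domain, `a₂ = q² a₁` for some
`q ∈ L`; writing `q = c / d` in lowest terms gives `a₂ d² = a₁ c²`, and coprimality forces
`d² ∣ a₁`.
-/

open Polynomial

namespace AdjoinRoot

variable {S : Type*} [CommRing S]

theorem root_X_pow_two_sub_C_sq (a : S) :
    root (X ^ 2 - C a) ^ 2 = of (X ^ 2 - C a) a := by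
  have h := eval₂_root (X ^ 2 - C a)
  rwa [eval₂_sub, eval₂_pow, eval₂_X, eval₂_C, sub_eq_zero] at h

theorem exists_of_add_of_mul_root_eq [Nontrivial S] (a : S) (t : AdjoinRoot (X ^ 2 - C a)) :
    ∃ x y : S, of _ x + of _ y * root _ = t := by
  have hf := monic_X_pow_sub_C a two_ne_zero
  obtain ⟨p, rfl⟩ := mk_surjective t
  have hdeg : (p %ₘ (X ^ 2 - C a)).degree ≤ 1 := by
    have := degree_modByMonic_lt p hf
    rw [degree_X_pow_sub_C two_pos] at this
    exact Order.le_of_lt_succ this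
  rw [← mk_leftInverse hf (mk _ p), modByMonicHom_mk, eq_X_add_C_of_degree_le_one hdeg]
  exact ⟨(p %ₘ (X ^ 2 - C a)).coeff 0, (p %ₘ (X ^ 2 - C a)).coeff 1, by simp [add_comm]⟩

theorem of_add_of_mul_root_eq_zero [Nontrivial S] {a x y : S}
    (h : of (X ^ 2 - C a) x + of _ y * root _ = 0) : x = 0 ∧ y = 0 := by
  have hdvd : X ^ 2 - C a ∣ C y * X + C x := by
    rw [← mk_eq_zero]
    simpa [add_comm] using h
  have hlin : C y * X + C x = 0 := by
    by_contra hne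
    refine (monic_X_pow_sub_C a two_ne_zero).not_dvd_of_degree_lt hne ?_ hdvd
    rw [degree_X_pow_sub_C two_pos]
    exact (degree_linear_le).trans_lt (by norm_num)
  exact ⟨by simpa using congrArg (coeff · 0) hlin, by simpa using congrArg (coeff · 1) hlin⟩

theorem exists_sq_eq_or_exists_sq_mul_eq [IsDomain S] (h2 : (2 : S) ≠ 0) {a b : S}
    {t : AdjoinRoot (X ^ 2 - C a)} (ht : t ^ 2 = of _ b) :
    (∃ x, x ^ 2 = b) ∨ ∃ y, y ^ 2 * a = b := by
  obtain ⟨x, y, rfl⟩ := exists_of_add_of_mul_root_eq a t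
  have hexp : of (X ^ 2 - C a) (x ^ 2 + y ^ 2 * a - b) + of _ (2 * x * y) * root _ = 0 := by
    simp only [map_sub, map_add, map_mul, map_pow, map_ofNat]
    linear_combination ht - of _ y ^ 2 * root_X_pow_two_sub_C_sq a
  obtain ⟨hb, hxy⟩ := of_add_of_mul_root_eq_zero hexp
  rcases mul_eq_zero.1 hxy with hx | hy
  · exact .inr ⟨y, by simpa [(mul_eq_zero.1 hx).resolve_left h2, sub_eq_zero] using hb⟩
  · exact .inl ⟨x, by simpa [hy, sub_eq_zero] using hb⟩

end AdjoinRoot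

theorem irreducible_X_pow_two_sub_C_of_adjoinRoot {F : Type*} [Field F] (h2 : (2 : F) ≠ 0)
    {a b : F} [Fact (Irreducible (X ^ 2 - C a))] (hb : ∀ x, x ^ 2 ≠ b)
    (hab : ∀ y, y ^ 2 * a ≠ b) :
    Irreducible (X ^ 2 - C (AdjoinRoot.of (X ^ 2 - C a) b)) := by
  rw [X_pow_sub_C_irreducible_iff_of_prime Nat.prime_two]
  intro t ht
  rcases AdjoinRoot.exists_sq_eq_or_exists_sq_mul_eq h2 ht with ⟨x, hx⟩ | ⟨y, hy⟩
  exacts [hb x hx, hab y hy]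

section Biquadratic

variable {R : Type*} [CommRing R]

noncomputable def biquadraticIdeal (a₁ a₂ : R) : Ideal (MvPolynomial (Fin 2) R) :=
  Ideal.span {MvPolynomial.X 0 ^ 2 - MvPolynomial.C a₁, MvPolynomial.X 1 ^ 2 - MvPolynomial.C a₂}

theorem biquadraticIdeal.exists_mk_eq (a₁ a₂ : R) (p : MvPolynomial (Fin 2) R) :
    ∃ α β γ δ : R, Ideal.Quotient.mk (biquadraticIdeal a₁ a₂) p =
      Ideal.Quotient.mk _ (MvPolynomial.C α + MvPolynomial.C β * MvPolynomial.X 0 +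
        MvPolynomial.C γ * MvPolynomial.X 1 +
        MvPolynomial.C δ * (MvPolynomial.X 0 * MvPolynomial.X 1)) := by
  set π := Ideal.Quotient.mk (biquadraticIdeal a₁ a₂)
  have hx₀ : π (MvPolynomial.X 0) ^ 2 = π (MvPolynomial.C a₁) := by
    rw [← map_pow, Ideal.Quotient.eq]
    exact Ideal.subset_span (Set.mem_insert _ _)
  have hx₁ : π (MvPolynomial.X 1) ^ 2 = π (MvPolynomial.C a₂) := by
    rw [← map_pow, Ideal.Quotient.eq]
    exact Ideal.subset_span (Set.mem_insert_of_mem _ rfl)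
  induction p using MvPolynomial.induction_on with
  | C r => exact ⟨r, 0, 0, 0, by simp⟩
  | add p q hp hq =>
    obtain ⟨α, β, γ, δ, hp⟩ := hp
    obtain ⟨α', β', γ', δ', hq⟩ := hq
    refine ⟨α + α', β + β', γ + γ', δ + δ', ?_⟩
    simp only [map_add, map_mul] at hp hq ⊢
    linear_combination hp + hq
  | mul_X p n hp =>
    obtain ⟨α, β, γ, δ, hp⟩ := hp
    obtain rfl | rfl : n = 0 ∨ n = 1 := by omega
    · refine ⟨β * a₁, α, δ * a₁, γ, ?_⟩
      simp only [map_add, map_mul] at hp ⊢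
      linear_combination π (MvPolynomial.X 0) * hp +
        (π (MvPolynomial.C β) + π (MvPolynomial.C δ) * π (MvPolynomial.X 1)) * hx₀
    · refine ⟨γ * a₂, δ * a₂, α, β, ?_⟩
      simp only [map_add, map_mul] at hp ⊢
      linear_combination π (MvPolynomial.X 1) * hp +
        (π (MvPolynomial.C γ) + π (MvPolynomial.C δ) * π (MvPolynomial.X 0)) * hx₁

theorem biquadraticIdeal_le_ker_aeval {A : Type*} [CommRing A] [Algebra R A] {a₁ a₂ : R}
    {x₁ x₂ : A} (hx₁ : x₁ ^ 2 = algebraMap R A a₁) (hx₂ : x₂ ^ 2 = algebraMap R A a₂) :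
    biquadraticIdeal a₁ a₂ ≤ RingHom.ker (MvPolynomial.aeval ![x₁, x₂]) := by
  rw [biquadraticIdeal, Ideal.span_le]
  rintro _ (rfl | rfl) <;> simp [hx₁, hx₂]

end Biquadratic

theorem isDomain_quotient_biquadraticIdeal {R L : Type*} [CommRing R] [Field L] [Algebra R L]
    (hinj : Function.Injective (algebraMap R L)) (h2 : (2 : L) ≠ 0) {a₁ a₂ : R}
    (h₁ : Irreducible (X ^ 2 - C (algebraMap R L a₁)))
    (ha₂ : ∀ x : L, x ^ 2 ≠ algebraMap R L a₂)
    (hq : ∀ q : L, q ^ 2 * algebraMap R L a₁ ≠ algebraMap R L a₂) :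
    IsDomain (MvPolynomial (Fin 2) R ⧸ biquadraticIdeal a₁ a₂) := by
  set f := (X ^ 2 - C (algebraMap R L a₁) : L[X])
  have : Fact (Irreducible f) := ⟨h₁⟩
  set g := (X ^ 2 - C (AdjoinRoot.of f (algebraMap R L a₂)) : (AdjoinRoot f)[X])
  have : Fact (Irreducible g) := ⟨irreducible_X_pow_two_sub_C_of_adjoinRoot h2 ha₂ hq⟩
  set φ : MvPolynomial (Fin 2) R →ₐ[R] AdjoinRoot g :=
    MvPolynomial.aeval ![AdjoinRoot.of g (AdjoinRoot.root f), AdjoinRoot.root g]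
  have hker : biquadraticIdeal a₁ a₂ ≤ RingHom.ker φ :=
    biquadraticIdeal_le_ker_aeval
      (by rw [← map_pow, AdjoinRoot.root_X_pow_two_sub_C_sq]; rfl)
      (by rw [AdjoinRoot.root_X_pow_two_sub_C_sq]; rfl)
  set ψ := Ideal.Quotient.lift _ (φ : MvPolynomial (Fin 2) R →+* AdjoinRoot g)
    fun _ hp ↦ RingHom.mem_ker.1 (hker hp)
  refine ((injective_iff_map_eq_zero ψ).2 ?_).isDomain
  intro t ht
  obtain ⟨p, rfl⟩ := Ideal.Quotient.mk_surjective t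
  obtain ⟨α, β, γ, δ, hp⟩ := biquadraticIdeal.exists_mk_eq a₁ a₂ p
  rw [hp, Ideal.Quotient.lift_mk] at ht
  rw [hp]
  have hexp : AdjoinRoot.of g (AdjoinRoot.of f (algebraMap R L α) +
        AdjoinRoot.of f (algebraMap R L β) * AdjoinRoot.root f) +
      AdjoinRoot.of g (AdjoinRoot.of f (algebraMap R L γ) +
        AdjoinRoot.of f (algebraMap R L δ) * AdjoinRoot.root f) * AdjoinRoot.root g = 0 := by
    rw [← ht]
    simp [φ, AdjoinRoot.algebraMap_eq']
    ring
  obtain ⟨hαβ, hγδ⟩ := AdjoinRoot.of_add_of_mul_root_eq_zero hexp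
  obtain ⟨hα, hβ⟩ := AdjoinRoot.of_add_of_mul_root_eq_zero hαβ
  obtain ⟨hγ, hδ⟩ := AdjoinRoot.of_add_of_mul_root_eq_zero hγδ
  simp [(map_eq_zero_iff _ hinj).1 hα, (map_eq_zero_iff _ hinj).1 hβ,
    (map_eq_zero_iff _ hinj).1 hγ, (map_eq_zero_iff _ hinj).1 hδ]

theorem exists_eq_sq_mul_of_sq_mul_eq {R L : Type*} [CommRing R] [IsDomain R]
    [UniqueFactorizationMonoid R] [Field L] [Algebra R L] [IsFractionRing R L] {a₁ a₂ : R}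
    (ha₁ : a₁ ≠ 0) (ha₂ : a₂ ≠ 0) {q : L} (hq : q ^ 2 * algebraMap R L a₁ = algebraMap R L a₂) :
    ∃ c d u : R, c ≠ 0 ∧ d ≠ 0 ∧ u ≠ 0 ∧
      a₁ = d ^ 2 * u ∧ a₂ = c ^ 2 * u ∧ IsRelPrime c d := by
  set c := IsFractionRing.num R q
  set d : R := (IsFractionRing.den R q : R)
  have hd : d ≠ 0 := nonZeroDivisors.coe_ne_zero _
  have hcd : IsRelPrime c d := IsFractionRing.num_den_reduced R q
  have hcross : a₂ * d ^ 2 = a₁ * c ^ 2 := by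
    apply IsFractionRing.injective R L
    rw [← IsFractionRing.mk'_num_den' R q] at hq
    field_simp at hq
    simp only [map_mul, map_pow]
    linear_combination -hq
  obtain ⟨u, hu⟩ : d ^ 2 ∣ a₁ :=
    (hcd.symm.pow (m := 2) (n := 2)).dvd_of_dvd_mul_right ⟨a₂, by linear_combination -hcross⟩
  have hc₂ : a₂ = c ^ 2 * u := by
    apply mul_right_cancel₀ (pow_ne_zero 2 hd)
    linear_combination hcross + c ^ 2 * hu
  exact ⟨c, d, u, fun hc ↦ ha₂ (by simp [hc₂, hc]), hd, fun hu₀ ↦ ha₁ (by simp [hu, hu₀]),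
    hu, hc₂, hcd⟩

/-- Let `R` be a UFD whose fraction field `L` has characteristic `≠ 2`.  Let
`a₁, a₂ ∈ R` and suppose `fᵢ = xᵢ² − aᵢ` is irreducible in `L[xᵢ]` for `i = 1, 2`.
If `T = R[x₁,x₂]/(f₁, f₂)` is not an integral domain, then there exist nonzero
`c, d, u ∈ R` with `a₁ = d²u`, `a₂ = c²u` and `c, d` relatively prime. -/
theorem stmt1 (R L : Type) [CommRing R] [IsDomain R] [UniqueFactorizationMonoid R]
    [Field L] [Algebra R L] [IsFractionRing R L] (hchar : ringChar L ≠ 2)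
    (a₁ a₂ : R)
    (h₁ : Irreducible (X ^ 2 - C (algebraMap R L a₁) : L[X]))
    (h₂ : Irreducible (X ^ 2 - C (algebraMap R L a₂) : L[X]))
    (hT : ¬ IsDomain (MvPolynomial (Fin 2) R ⧸
      (Ideal.span {MvPolynomial.X 0 ^ 2 - MvPolynomial.C a₁,
        MvPolynomial.X 1 ^ 2 - MvPolynomial.C a₂} : Ideal (MvPolynomial (Fin 2) R)))) :
    ∃ c d u : R, c ≠ 0 ∧ d ≠ 0 ∧ u ≠ 0 ∧
      a₁ = d ^ 2 * u ∧ a₂ = c ^ 2 * u ∧ IsRelPrime c d := by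
  have hinj := IsFractionRing.injective R L
  have hsq₁ := (X_pow_sub_C_irreducible_iff_of_prime Nat.prime_two).1 h₁
  have hsq₂ := (X_pow_sub_C_irreducible_iff_of_prime Nat.prime_two).1 h₂
  have ha₁ : a₁ ≠ 0 := by
    rintro rfl
    exact hsq₁ 0 (by simp)
  have ha₂ : a₂ ≠ 0 := by
    rintro rfl
    exact hsq₂ 0 (by simp)
  obtain ⟨q, hq⟩ : ∃ q : L, q ^ 2 * algebraMap R L a₁ = algebraMap R L a₂ := by
    by_contra! hq
    exact hT (isDomain_quotient_biquadraticIdeal hinj (Ring.two_ne_zero hchar) h₁ hsq₂ hq)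
  exact exists_eq_sq_mul_of_sq_mul_eq ha₁ ha₂ hq
end

section
/- Let R be a unique factorization domain, let B = R[x,y], and let u, c, d be nonzero elements of R such that {c, d} is a regular sequence in R and the polynomial z² − u is irreducible in R[z]. Define f₁ = x² − d²u, f₂ = y² − c²u, and let I = (f₁, f₂) ⊆ B. Then the minimal prime ideals of B over I are exactly the two ideals P_r = (f₁, f₂, dy + (−1)^r cx, xy + (−1)^r cdu) for r = 0, 1. -/
open MvPolynomial

namespace Stmt3Aux

variable {R : Type} [CommRing R] [IsDomain R]

set_option linter.unusedSectionVars false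
set_option linter.unusedVariables false
set_option linter.unnecessarySimpa false
set_option maxHeartbeats 1000000

noncomputable def φ (d e : R) : MvPolynomial (Fin 2) R →+* Polynomial R :=
  (aeval ![Polynomial.C d * Polynomial.X, Polynomial.C e * Polynomial.X] :
    MvPolynomial (Fin 2) R →ₐ[R] Polynomial R).toRingHom

@[simp] lemma φ_X0 (d e : R) : φ d e (X 0) = Polynomial.C d * Polynomial.X := by
  simp [φ]

@[simp] lemma φ_X1 (d e : R) : φ d e (X 1) = Polynomial.C e * Polynomial.X := by
  simp [φ]

@[simp] lemma φ_C (d e a : R) : φ d e (C a) = Polynomial.C a := by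
  simp [φ]

lemma lin_zero (u a m : R)
    (h : Polynomial.C a + Polynomial.C m * Polynomial.X ∈
      Ideal.span {(Polynomial.X : Polynomial R) ^ 2 - Polynomial.C u}) :
    a = 0 ∧ m = 0 := by
  rw [Ideal.mem_span_singleton] at h
  obtain ⟨q, hq⟩ := h
  rcases eq_or_ne q 0 with rfl | hq0
  · rw [mul_zero] at hq
    constructor
    · have := congrArg (fun p => Polynomial.coeff p 0) hq
      simpa using this
    · have := congrArg (fun p => Polynomial.coeff p 1) hq
      simpa using this
  · exfalso
    have hmonic : ((Polynomial.X : Polynomial R) ^ 2 - Polynomial.C u).natDegree = 2 := by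
      simpa using Polynomial.natDegree_X_pow_sub_C (n := 2) (a := u)
    have hne : ((Polynomial.X : Polynomial R) ^ 2 - Polynomial.C u) ≠ 0 := by
      intro h0
      rw [h0] at hmonic
      simp at hmonic
    have h2 : (Polynomial.C a + Polynomial.C m * Polynomial.X).natDegree = 2 + q.natDegree := by
      rw [hq, Polynomial.natDegree_mul hne hq0, hmonic]
    have h3 : (Polynomial.C a + Polynomial.C m * Polynomial.X).natDegree ≤ 1 := by
      apply le_trans (Polynomial.natDegree_add_le _ _)
      simp [Polynomial.natDegree_C_mul_le]
      exact le_trans (Polynomial.natDegree_mul_le) (by simp)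
    omega

lemma reduce (u c d : R) (f : MvPolynomial (Fin 2) R) :
    ∃ a b e g : R, f - (C a + C b * X 0 + C e * X 1 + C g * (X 0 * X 1)) ∈
      Ideal.span {(X 0 : MvPolynomial (Fin 2) R) ^ 2 - C (d ^ 2 * u),
        (X 1 : MvPolynomial (Fin 2) R) ^ 2 - C (c ^ 2 * u)} := by
  induction f using MvPolynomial.induction_on with
  | C a => exact ⟨a, 0, 0, 0, by simp⟩
  | add p q hp hq =>
    obtain ⟨a, b, e, g, hp⟩ := hp
    obtain ⟨a', b', e', g', hq⟩ := hq
    refine ⟨a + a', b + b', e + e', g + g', ?_⟩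
    have := Ideal.add_mem _ hp hq
    convert this using 1
    simp only [map_add]
    ring
  | mul_X p i hp =>
    obtain ⟨a, b, e, g, hp⟩ := hp
    have h1 : ((X 0 : MvPolynomial (Fin 2) R) ^ 2 - C (d ^ 2 * u)) ∈
        Ideal.span {(X 0 : MvPolynomial (Fin 2) R) ^ 2 - C (d ^ 2 * u),
          (X 1 : MvPolynomial (Fin 2) R) ^ 2 - C (c ^ 2 * u)} :=
      Ideal.subset_span (by simp)
    have h2 : ((X 1 : MvPolynomial (Fin 2) R) ^ 2 - C (c ^ 2 * u)) ∈
        Ideal.span {(X 0 : MvPolynomial (Fin 2) R) ^ 2 - C (d ^ 2 * u),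
          (X 1 : MvPolynomial (Fin 2) R) ^ 2 - C (c ^ 2 * u)} :=
      Ideal.subset_span (by simp)
    fin_cases i
    · refine ⟨b * (d ^ 2 * u), a, g * (d ^ 2 * u), e, ?_⟩
      have := Ideal.add_mem _ (Ideal.mul_mem_right (X 0) _ hp)
        (Ideal.mul_mem_left _ (C b + C g * X 1) h1)
      convert this using 1
      simp only [map_mul, Fin.mk_zero, Fin.mk_one]
      ring
    · refine ⟨e * (c ^ 2 * u), g * (c ^ 2 * u), a, b, ?_⟩
      have := Ideal.add_mem _ (Ideal.mul_mem_right (X 1) _ hp)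
        (Ideal.mul_mem_left _ (C e + C g * X 0) h2)
      convert this using 1
      simp only [map_mul, Fin.mk_zero, Fin.mk_one]
      ring

lemma ker_eq (u c d ε : R) (hc : c ≠ 0) (hε : ε * ε = 1)
    (hd_reg : ∀ a : R, d * a ∈ Ideal.span {c} → a ∈ Ideal.span {c}) :
    Ideal.span {(X 0 : MvPolynomial (Fin 2) R) ^ 2 - C (d ^ 2 * u),
        (X 1 : MvPolynomial (Fin 2) R) ^ 2 - C (c ^ 2 * u),
        C d * X 1 - C (ε * c) * X 0,
        X 0 * X 1 - C (ε * (c * d * u))} =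
      Ideal.comap (φ d (ε * c))
        (Ideal.span {(Polynomial.X : Polynomial R) ^ 2 - Polynomial.C u}) := by
  have hCε : (C ε : MvPolynomial (Fin 2) R) * C ε = 1 := by rw [← map_mul, hε, map_one]
  have hCεP : (Polynomial.C ε : Polynomial R) * Polynomial.C ε = 1 := by
    rw [← map_mul, hε, map_one]
  have hle : Ideal.span {(X 0 : MvPolynomial (Fin 2) R) ^ 2 - C (d ^ 2 * u),
        (X 1 : MvPolynomial (Fin 2) R) ^ 2 - C (c ^ 2 * u),
        C d * X 1 - C (ε * c) * X 0,
        X 0 * X 1 - C (ε * (c * d * u))} ≤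
      Ideal.comap (φ d (ε * c))
        (Ideal.span {(Polynomial.X : Polynomial R) ^ 2 - Polynomial.C u}) := by
    rw [Ideal.span_le]
    intro p hp
    simp only [Set.mem_insert_iff, Set.mem_singleton_iff] at hp
    simp only [SetLike.mem_coe, Ideal.mem_comap, Ideal.mem_span_singleton]
    rcases hp with rfl | rfl | rfl | rfl
    · exact ⟨Polynomial.C (d ^ 2), by
        simp only [map_sub, map_pow, map_mul, φ_X0, φ_C, Polynomial.C_mul, Polynomial.C_pow]
        ring⟩
    · refine ⟨Polynomial.C (c ^ 2), ?_⟩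
      simp only [map_sub, map_pow, map_mul, φ_X1, φ_C, Polynomial.C_mul, Polynomial.C_pow]
      linear_combination (Polynomial.C c ^ 2 * Polynomial.X ^ 2 : Polynomial R) * hCεP
    · refine ⟨0, ?_⟩
      simp only [map_sub, map_mul, φ_X0, φ_X1, φ_C, Polynomial.C_mul]
      ring
    · refine ⟨Polynomial.C (ε * (c * d)), ?_⟩
      simp only [map_sub, map_mul, φ_X0, φ_X1, φ_C, Polynomial.C_mul]
      ring
  refine le_antisymm hle ?_
  intro f hf
  rw [Ideal.mem_comap] at hf
  obtain ⟨a, b, e, g, hmem⟩ := reduce u c d f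
  set P := Ideal.span {(X 0 : MvPolynomial (Fin 2) R) ^ 2 - C (d ^ 2 * u),
      (X 1 : MvPolynomial (Fin 2) R) ^ 2 - C (c ^ 2 * u),
      C d * X 1 - C (ε * c) * X 0,
      X 0 * X 1 - C (ε * (c * d * u))} with hP
  have hIP : Ideal.span {(X 0 : MvPolynomial (Fin 2) R) ^ 2 - C (d ^ 2 * u),
      (X 1 : MvPolynomial (Fin 2) R) ^ 2 - C (c ^ 2 * u)} ≤ P := by
    rw [Ideal.span_le]; intro p hp
    simp only [Set.mem_insert_iff, Set.mem_singleton_iff] at hp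
    rcases hp with rfl | rfl
    · exact Ideal.subset_span (Set.mem_insert _ _)
    · exact Ideal.subset_span (Set.mem_insert_iff.mpr (Or.inr (Set.mem_insert _ _)))
  have hg3 : (C d * X 1 - C (ε * c) * X 0 : MvPolynomial (Fin 2) R) ∈ P :=
    Ideal.subset_span (Set.mem_insert_iff.mpr (Or.inr (Or.inr (Or.inl rfl))))
  have hg4 : (X 0 * X 1 - C (ε * (c * d * u)) : MvPolynomial (Fin 2) R) ∈ P :=
    Ideal.subset_span (Set.mem_insert_iff.mpr (Or.inr (Or.inr (Or.inr rfl))))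
  -- f ≡ C a' + C b * X 0 + C e * X 1 mod P where a' = a + g * (ε*(c*d*u))
  have key : f - (C (a + g * (ε * (c * d * u))) + C b * X 0 + C e * X 1) ∈ P := by
    have := Ideal.add_mem _ (hIP hmem) (Ideal.mul_mem_left _ (C g) hg4)
    convert this using 1
    simp only [map_add, map_mul]
    ring
  -- its image is in the span, so a' = 0 and b*d + e*(ε*c) = 0
  have hPker : ∀ p ∈ P, φ d (ε * c) p ∈
      Ideal.span {(Polynomial.X : Polynomial R) ^ 2 - Polynomial.C u} := fun p hp =>
    Ideal.mem_comap.mp (hle hp)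
  have himg : φ d (ε * c) (C (a + g * (ε * (c * d * u))) + C b * X 0 + C e * X 1) ∈
      Ideal.span {(Polynomial.X : Polynomial R) ^ 2 - Polynomial.C u} := by
    have h2 := hPker _ key
    simp only [map_sub] at h2
    have := Ideal.sub_mem _ hf h2
    simpa using this
  have hlin : a + g * (ε * (c * d * u)) = 0 ∧ b * d + e * (ε * c) = 0 := by
    apply lin_zero u
    convert himg using 1
    simp only [map_add, map_mul, φ_X0, φ_X1, φ_C, Polynomial.C_mul, Polynomial.C_add]
    ring
  obtain ⟨ha', hbd⟩ := hlin
  -- b ∈ (c)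
  have hb : c ∣ b := by
    have : d * b ∈ Ideal.span {c} := by
      rw [Ideal.mem_span_singleton]
      exact ⟨-(e * ε), by linear_combination hbd⟩
    rw [← Ideal.mem_span_singleton]
    exact hd_reg b this
  obtain ⟨lam, hlam⟩ := hb
  have he : e = -(lam * d * ε) := by
    have h2 : lam * d + e * ε = 0 := by
      have hcc : c * (lam * d + e * ε) = 0 := by
        linear_combination hbd - d * hlam
      rcases mul_eq_zero.mp hcc with h | h
      · exact absurd h hc
      · exact h
    linear_combination ε * h2 - e * hε
  -- conclude
  have hfin : (C b * X 0 + C e * X 1 : MvPolynomial (Fin 2) R) ∈ P := by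
    have : (C b * X 0 + C e * X 1 : MvPolynomial (Fin 2) R) =
        C (-(lam * ε)) * (C d * X 1 - C (ε * c) * X 0) := by
      rw [hlam, he]
      simp only [map_mul, map_neg]
      linear_combination (-(C lam * C c * X 0) : MvPolynomial (Fin 2) R) * hCε
    rw [this]
    exact Ideal.mul_mem_left _ _ hg3
  have : f = (f - (C (a + g * (ε * (c * d * u))) + C b * X 0 + C e * X 1)) +
      (C b * X 0 + C e * X 1) := by
    rw [ha', map_zero]; ring
  rw [this]
  exact Ideal.add_mem _ key hfin

lemma span4_le {Q : Ideal (MvPolynomial (Fin 2) R)} {a b c d : MvPolynomial (Fin 2) R}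
    (ha : a ∈ Q) (hb : b ∈ Q) (hc : c ∈ Q) (hd : d ∈ Q) :
    Ideal.span {a, b, c, d} ≤ Q := by
  rw [Ideal.span_le]
  intro p hp
  simp only [Set.mem_insert_iff, Set.mem_singleton_iff] at hp
  rcases hp with rfl | rfl | rfl | rfl <;> assumption

lemma dichotomy (u c d : R) {Q : Ideal (MvPolynomial (Fin 2) R)} (hQ : Q.IsPrime)
    (hf1 : (X 0 : MvPolynomial (Fin 2) R) ^ 2 - C (d ^ 2 * u) ∈ Q)
    (hf2 : (X 1 : MvPolynomial (Fin 2) R) ^ 2 - C (c ^ 2 * u) ∈ Q) :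
    Ideal.span {(X 0 : MvPolynomial (Fin 2) R) ^ 2 - C (d ^ 2 * u),
        (X 1 : MvPolynomial (Fin 2) R) ^ 2 - C (c ^ 2 * u),
        C d * X 1 - C ((-1 : R) * c) * X 0,
        X 0 * X 1 - C ((-1 : R) * (c * d * u))} ≤ Q ∨
      Ideal.span {(X 0 : MvPolynomial (Fin 2) R) ^ 2 - C (d ^ 2 * u),
        (X 1 : MvPolynomial (Fin 2) R) ^ 2 - C (c ^ 2 * u),
        C d * X 1 - C ((1 : R) * c) * X 0,
        X 0 * X 1 - C ((1 : R) * (c * d * u))} ≤ Q := by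
  -- first dichotomy : dy + cx or dy - cx
  have hs1 : (C d * X 1 - C ((-1 : R) * c) * X 0 : MvPolynomial (Fin 2) R) ∈ Q ∨
      (C d * X 1 - C ((1 : R) * c) * X 0 : MvPolynomial (Fin 2) R) ∈ Q := by
    apply hQ.mem_or_mem
    have : (C d * X 1 - C ((-1 : R) * c) * X 0) * (C d * X 1 - C ((1 : R) * c) * X 0) =
        (C d * C d) * ((X 1 : MvPolynomial (Fin 2) R) ^ 2 - C (c ^ 2 * u)) -
          (C c * C c) * ((X 0 : MvPolynomial (Fin 2) R) ^ 2 - C (d ^ 2 * u)) := by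
      simp only [C_mul, C_pow, map_neg, neg_one_mul, one_mul]
      ring
    rw [this]
    exact Ideal.sub_mem _ (Ideal.mul_mem_left _ _ hf2) (Ideal.mul_mem_left _ _ hf1)
  -- second dichotomy : xy + cdu or xy - cdu
  have hs2 : (X 0 * X 1 - C ((-1 : R) * (c * d * u)) : MvPolynomial (Fin 2) R) ∈ Q ∨
      (X 0 * X 1 - C ((1 : R) * (c * d * u)) : MvPolynomial (Fin 2) R) ∈ Q := by
    apply hQ.mem_or_mem
    have : (X 0 * X 1 - C ((-1 : R) * (c * d * u))) *
          ((X 0 : MvPolynomial (Fin 2) R) * X 1 - C ((1 : R) * (c * d * u))) =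
        (X 1 : MvPolynomial (Fin 2) R) ^ 2 *
            ((X 0 : MvPolynomial (Fin 2) R) ^ 2 - C (d ^ 2 * u)) +
          (C d * C d * C u) * ((X 1 : MvPolynomial (Fin 2) R) ^ 2 - C (c ^ 2 * u)) := by
      simp only [C_mul, C_pow, map_neg, neg_one_mul, one_mul]
      ring
    rw [this]
    exact Ideal.add_mem _ (Ideal.mul_mem_left _ _ hf1) (Ideal.mul_mem_left _ _ hf2)
  -- helper: from C c / C d / C u ∈ Q we get the products
  have hXY : ∀ (_ : (C c : MvPolynomial (Fin 2) R) ∈ Q ∨ (C d : MvPolynomial (Fin 2) R) ∈ Q ∨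
      (C u : MvPolynomial (Fin 2) R) ∈ Q),
      (X 0 * X 1 : MvPolynomial (Fin 2) R) ∈ Q ∧ (C (c * d * u) : MvPolynomial (Fin 2) R) ∈ Q := by
    rintro (h | h | h)
    · have hX1 : (X 1 : MvPolynomial (Fin 2) R) ∈ Q := by
        refine (hQ.mem_or_mem (show (X 1 : MvPolynomial (Fin 2) R) * X 1 ∈ Q from ?_)).elim id id
        have e : (X 1 : MvPolynomial (Fin 2) R) * X 1 =
            ((X 1 : MvPolynomial (Fin 2) R) ^ 2 - C (c ^ 2 * u)) + C c * (C c * C u) := by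
          simp only [C_mul, C_pow]; ring
        rw [e]
        exact Ideal.add_mem _ hf2 (Ideal.mul_mem_right _ _ h)
      refine ⟨Ideal.mul_mem_left _ _ hX1, ?_⟩
      have e : (C (c * d * u) : MvPolynomial (Fin 2) R) = C c * (C d * C u) := by
        simp only [C_mul]; ring
      rw [e]; exact Ideal.mul_mem_right _ _ h
    · have hX0 : (X 0 : MvPolynomial (Fin 2) R) ∈ Q := by
        refine (hQ.mem_or_mem (show (X 0 : MvPolynomial (Fin 2) R) * X 0 ∈ Q from ?_)).elim id id
        have e : (X 0 : MvPolynomial (Fin 2) R) * X 0 =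
            ((X 0 : MvPolynomial (Fin 2) R) ^ 2 - C (d ^ 2 * u)) + C d * (C d * C u) := by
          simp only [C_mul, C_pow]; ring
        rw [e]
        exact Ideal.add_mem _ hf1 (Ideal.mul_mem_right _ _ h)
      refine ⟨Ideal.mul_mem_right _ _ hX0, ?_⟩
      have e : (C (c * d * u) : MvPolynomial (Fin 2) R) = C d * (C c * C u) := by
        simp only [C_mul]; ring
      rw [e]; exact Ideal.mul_mem_right _ _ h
    · have hX0 : (X 0 : MvPolynomial (Fin 2) R) ∈ Q := by
        refine (hQ.mem_or_mem (show (X 0 : MvPolynomial (Fin 2) R) * X 0 ∈ Q from ?_)).elim id id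
        have e : (X 0 : MvPolynomial (Fin 2) R) * X 0 =
            ((X 0 : MvPolynomial (Fin 2) R) ^ 2 - C (d ^ 2 * u)) + C u * (C d * C d) := by
          simp only [C_mul, C_pow]; ring
        rw [e]
        exact Ideal.add_mem _ hf1 (Ideal.mul_mem_right _ _ h)
      refine ⟨Ideal.mul_mem_right _ _ hX0, ?_⟩
      have e : (C (c * d * u) : MvPolynomial (Fin 2) R) = C u * (C c * C d) := by
        simp only [C_mul]; ring
      rw [e]; exact Ideal.mul_mem_right _ _ h
  rcases hs1 with h3 | h3 <;> rcases hs2 with h4 | h4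
  · exact Or.inl (span4_le hf1 hf2 h3 h4)
  · -- mixed: dy+cx ∈ Q, xy - cdu ∈ Q
    -- C (2*c*(d^2*u)) ∈ Q
    have hkey : (C (2 * c * (d ^ 2 * u)) : MvPolynomial (Fin 2) R) ∈ Q := by
      have e : (C (2 * c * (d ^ 2 * u)) : MvPolynomial (Fin 2) R) =
          X 0 * (C d * X 1 - C ((-1 : R) * c) * X 0) -
            C d * (X 0 * X 1 - C ((1 : R) * (c * d * u))) -
            C c * ((X 0 : MvPolynomial (Fin 2) R) ^ 2 - C (d ^ 2 * u)) := by
        simp only [C_mul, C_pow, map_neg, neg_one_mul, one_mul, map_ofNat]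
        ring
      rw [e]
      exact Ideal.sub_mem _ (Ideal.sub_mem _ (Ideal.mul_mem_left _ _ h3)
        (Ideal.mul_mem_left _ _ h4)) (Ideal.mul_mem_left _ _ hf1)
    have hsplit : (C 2 : MvPolynomial (Fin 2) R) ∈ Q ∨ (C c : MvPolynomial (Fin 2) R) ∈ Q ∨
        (C d : MvPolynomial (Fin 2) R) ∈ Q ∨ (C u : MvPolynomial (Fin 2) R) ∈ Q := by
      have e : (C (2 * c * (d ^ 2 * u)) : MvPolynomial (Fin 2) R) =
          C 2 * (C c * (C d * (C d * C u))) := by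
        simp only [C_mul, C_pow, map_ofNat]; ring
      rw [e] at hkey
      rcases hQ.mem_or_mem hkey with h | h
      · exact Or.inl h
      rcases hQ.mem_or_mem h with h | h
      · exact Or.inr (Or.inl h)
      rcases hQ.mem_or_mem h with h | h
      · exact Or.inr (Or.inr (Or.inl h))
      rcases hQ.mem_or_mem h with h | h
      · exact Or.inr (Or.inr (Or.inl h))
      · exact Or.inr (Or.inr (Or.inr h))
    left
    refine span4_le hf1 hf2 h3 ?_
    rcases hsplit with h | h
    · -- char 2 style: xy + cdu = (xy - cdu) + C (2 * (cdu))
      have hc2 : (C (2 * (c * d * u)) : MvPolynomial (Fin 2) R) ∈ Q := by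
        rw [C_mul]; exact Ideal.mul_mem_right _ _ h
      have e : (X 0 * X 1 - C ((-1 : R) * (c * d * u)) : MvPolynomial (Fin 2) R) =
          (X 0 * X 1 - C ((1 : R) * (c * d * u))) + C (2 * (c * d * u)) := by
        rw [show ((2 : R) * (c * d * u)) = (1 : R) * (c * d * u) - (-1 : R) * (c * d * u) by ring,
          C_sub]
        ring
      rw [e]
      exact Ideal.add_mem _ h4 hc2
    · obtain ⟨hxy, hcdu⟩ := hXY h
      have e : (X 0 * X 1 - C ((-1 : R) * (c * d * u)) : MvPolynomial (Fin 2) R) =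
          X 0 * X 1 + C (c * d * u) := by
        rw [neg_one_mul, map_neg]; ring
      rw [e]
      exact Ideal.add_mem _ hxy hcdu
  · -- mixed: dy - cx ∈ Q, xy + cdu ∈ Q
    have hkey : (C (2 * c * (d ^ 2 * u)) : MvPolynomial (Fin 2) R) ∈ Q := by
      have e : (C (2 * c * (d ^ 2 * u)) : MvPolynomial (Fin 2) R) =
          C d * (X 0 * X 1 - C ((-1 : R) * (c * d * u))) -
            X 0 * (C d * X 1 - C ((1 : R) * c) * X 0) -
            C c * ((X 0 : MvPolynomial (Fin 2) R) ^ 2 - C (d ^ 2 * u)) := by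
        simp only [C_mul, C_pow, map_neg, neg_one_mul, one_mul, map_ofNat]
        ring
      rw [e]
      exact Ideal.sub_mem _ (Ideal.sub_mem _ (Ideal.mul_mem_left _ _ h4)
        (Ideal.mul_mem_left _ _ h3)) (Ideal.mul_mem_left _ _ hf1)
    have hsplit : (C 2 : MvPolynomial (Fin 2) R) ∈ Q ∨ (C c : MvPolynomial (Fin 2) R) ∈ Q ∨
        (C d : MvPolynomial (Fin 2) R) ∈ Q ∨ (C u : MvPolynomial (Fin 2) R) ∈ Q := by
      have e : (C (2 * c * (d ^ 2 * u)) : MvPolynomial (Fin 2) R) =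
          C 2 * (C c * (C d * (C d * C u))) := by
        simp only [C_mul, C_pow, map_ofNat]; ring
      rw [e] at hkey
      rcases hQ.mem_or_mem hkey with h | h
      · exact Or.inl h
      rcases hQ.mem_or_mem h with h | h
      · exact Or.inr (Or.inl h)
      rcases hQ.mem_or_mem h with h | h
      · exact Or.inr (Or.inr (Or.inl h))
      rcases hQ.mem_or_mem h with h | h
      · exact Or.inr (Or.inr (Or.inl h))
      · exact Or.inr (Or.inr (Or.inr h))
    right
    refine span4_le hf1 hf2 h3 ?_
    rcases hsplit with h | h
    · have hc2 : (C (2 * (c * d * u)) : MvPolynomial (Fin 2) R) ∈ Q := by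
        rw [C_mul]; exact Ideal.mul_mem_right _ _ h
      have e : (X 0 * X 1 - C ((1 : R) * (c * d * u)) : MvPolynomial (Fin 2) R) =
          (X 0 * X 1 - C ((-1 : R) * (c * d * u))) - C (2 * (c * d * u)) := by
        rw [show ((2 : R) * (c * d * u)) = (1 : R) * (c * d * u) - (-1 : R) * (c * d * u) by ring,
          C_sub]
        ring
      rw [e]
      exact Ideal.sub_mem _ h4 hc2
    · obtain ⟨hxy, hcdu⟩ := hXY h
      have e : (X 0 * X 1 - C ((1 : R) * (c * d * u)) : MvPolynomial (Fin 2) R) =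
          X 0 * X 1 - C (c * d * u) := by rw [one_mul]
      rw [e]
      exact Ideal.sub_mem _ hxy hcdu
  · exact Or.inr (span4_le hf1 hf2 h3 h4)

lemma P_prime [UniqueFactorizationMonoid R] (u c d ε : R) (hc : c ≠ 0) (hε : ε * ε = 1)
    (hd_reg : ∀ a : R, d * a ∈ Ideal.span {c} → a ∈ Ideal.span {c})
    (hirr : Irreducible (Polynomial.X ^ 2 - Polynomial.C u : Polynomial R)) :
    (Ideal.span {(X 0 : MvPolynomial (Fin 2) R) ^ 2 - C (d ^ 2 * u),
        (X 1 : MvPolynomial (Fin 2) R) ^ 2 - C (c ^ 2 * u),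
        C d * X 1 - C (ε * c) * X 0,
        X 0 * X 1 - C (ε * (c * d * u))}).IsPrime := by
  rw [ker_eq u c d ε hc hε hd_reg]
  have hpr : Prime ((Polynomial.X : Polynomial R) ^ 2 - Polynomial.C u) :=
    UniqueFactorizationMonoid.irreducible_iff_prime.mp hirr
  haveI : (Ideal.span {(Polynomial.X : Polynomial R) ^ 2 - Polynomial.C u}).IsPrime :=
    (Ideal.span_singleton_prime hpr.ne_zero).mpr hpr
  exact Ideal.comap_isPrime _ _

lemma two_eq_zero (u c d ε : R) (hu : u ≠ 0) (hc : c ≠ 0) (hd : d ≠ 0) (hε : ε * ε = 1)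
    (hd_reg : ∀ a : R, d * a ∈ Ideal.span {c} → a ∈ Ideal.span {c})
    (hmem : (C (2 * (c * d * u)) : MvPolynomial (Fin 2) R) ∈
      Ideal.span {(X 0 : MvPolynomial (Fin 2) R) ^ 2 - C (d ^ 2 * u),
        (X 1 : MvPolynomial (Fin 2) R) ^ 2 - C (c ^ 2 * u),
        C d * X 1 - C (ε * c) * X 0,
        X 0 * X 1 - C (ε * (c * d * u))}) : (2 : R) = 0 := by
  rw [ker_eq u c d ε hc hε hd_reg, Ideal.mem_comap] at hmem
  have h0 : (2 : R) * (c * d * u) = 0 := by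
    refine (lin_zero u (2 * (c * d * u)) 0 ?_).1
    simpa using hmem
  exact (mul_eq_zero.mp h0).resolve_right (mul_ne_zero (mul_ne_zero hc hd) hu)

lemma char2_eq (u c d : R) (h2 : (2 : R) = 0) :
    Ideal.span {(X 0 : MvPolynomial (Fin 2) R) ^ 2 - C (d ^ 2 * u),
        (X 1 : MvPolynomial (Fin 2) R) ^ 2 - C (c ^ 2 * u),
        C d * X 1 - C ((-1 : R) * c) * X 0,
        X 0 * X 1 - C ((-1 : R) * (c * d * u))} =
      Ideal.span {(X 0 : MvPolynomial (Fin 2) R) ^ 2 - C (d ^ 2 * u),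
        (X 1 : MvPolynomial (Fin 2) R) ^ 2 - C (c ^ 2 * u),
        C d * X 1 - C ((1 : R) * c) * X 0,
        X 0 * X 1 - C ((1 : R) * (c * d * u))} := by
  have e3 : (C d * X 1 - C ((-1 : R) * c) * X 0 : MvPolynomial (Fin 2) R) =
      C d * X 1 - C ((1 : R) * c) * X 0 + C (2 * c) * X 0 := by
    rw [show ((2 : R) * c) = (1 : R) * c - (-1 : R) * c by ring, C_sub]
    ring
  have e4 : (X 0 * X 1 - C ((-1 : R) * (c * d * u)) : MvPolynomial (Fin 2) R) =
      X 0 * X 1 - C ((1 : R) * (c * d * u)) + C (2 * (c * d * u)) := by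
    rw [show ((2 : R) * (c * d * u)) = (1 : R) * (c * d * u) - (-1 : R) * (c * d * u) by ring,
      C_sub]
    ring
  have z3 : (C (2 * c) : MvPolynomial (Fin 2) R) = 0 := by
    rw [h2, zero_mul, C_0]
  have z4 : (C (2 * (c * d * u)) : MvPolynomial (Fin 2) R) = 0 := by
    rw [h2, zero_mul, C_0]
  rw [e3, e4, z3, z4, zero_mul, add_zero, add_zero]

end Stmt3Aux

set_option maxHeartbeats 1000000 in
set_option linter.unusedVariables false in
/-- Let `R` be a UFD, `B = R[x,y]`, and `u, c, d` nonzero elements of `R` such that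
`{c, d}` is a regular sequence in `R` and `z² − u` is irreducible in `R[z]`.
With `f₁ = x² − d²u`, `f₂ = y² − c²u` and `I = (f₁, f₂) ⊆ B`, the minimal primes of
`B` over `I` are exactly the two ideals
`P_r = (f₁, f₂, dy + (−1)^r cx, xy + (−1)^r cdu)`, `r = 0, 1`. -/
theorem stmt3 (R : Type) [CommRing R] [IsDomain R] [UniqueFactorizationMonoid R]
    (u c d : R) (hu : u ≠ 0) (hc : c ≠ 0) (hd : d ≠ 0)
    -- `{c, d}` is a regular sequence in `R`:
    (hc_reg : c ∈ nonZeroDivisors R)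
    (hd_reg : ∀ a : R, d * a ∈ Ideal.span {c} → a ∈ Ideal.span {c})
    (h_proper : (Ideal.span {c, d} : Ideal R) ≠ ⊤)
    -- `z² − u` is irreducible in `R[z]`:
    (hirr : Irreducible (Polynomial.X ^ 2 - Polynomial.C u : Polynomial R)) :
    (Ideal.span {(X 0 : MvPolynomial (Fin 2) R) ^ 2 - C (d ^ 2 * u),
        (X 1 : MvPolynomial (Fin 2) R) ^ 2 - C (c ^ 2 * u)}).minimalPrimes =
      { Ideal.span {(X 0 : MvPolynomial (Fin 2) R) ^ 2 - C (d ^ 2 * u),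
          (X 1 : MvPolynomial (Fin 2) R) ^ 2 - C (c ^ 2 * u),
          C d * X 1 + C c * X 0,
          X 0 * X 1 + C (c * d * u)},
        Ideal.span {(X 0 : MvPolynomial (Fin 2) R) ^ 2 - C (d ^ 2 * u),
          (X 1 : MvPolynomial (Fin 2) R) ^ 2 - C (c ^ 2 * u),
          C d * X 1 - C c * X 0,
          X 0 * X 1 - C (c * d * u)} } := by
  have hε₁ : ((-1 : R)) * (-1) = 1 := by ring
  have hε₂ : ((1 : R)) * 1 = 1 := by ring
  have hg3m : (C d * X 1 + C c * X 0 : MvPolynomial (Fin 2) R) =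
      C d * X 1 - C ((-1 : R) * c) * X 0 := by rw [neg_one_mul, map_neg]; ring
  have hg4m : (X 0 * X 1 + C (c * d * u) : MvPolynomial (Fin 2) R) =
      X 0 * X 1 - C ((-1 : R) * (c * d * u)) := by rw [neg_one_mul, map_neg]; ring
  have hg3p : (C d * X 1 - C c * X 0 : MvPolynomial (Fin 2) R) =
      C d * X 1 - C ((1 : R) * c) * X 0 := by rw [one_mul]
  have hg4p : (X 0 * X 1 - C (c * d * u) : MvPolynomial (Fin 2) R) =
      X 0 * X 1 - C ((1 : R) * (c * d * u)) := by rw [one_mul]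
  rw [hg3m, hg4m, hg3p, hg4p]
  have hf1I : ((X 0 : MvPolynomial (Fin 2) R) ^ 2 - C (d ^ 2 * u)) ∈
      Ideal.span {(X 0 : MvPolynomial (Fin 2) R) ^ 2 - C (d ^ 2 * u),
        (X 1 : MvPolynomial (Fin 2) R) ^ 2 - C (c ^ 2 * u)} :=
    Ideal.subset_span (Set.mem_insert _ _)
  have hf2I : ((X 1 : MvPolynomial (Fin 2) R) ^ 2 - C (c ^ 2 * u)) ∈
      Ideal.span {(X 0 : MvPolynomial (Fin 2) R) ^ 2 - C (d ^ 2 * u),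
        (X 1 : MvPolynomial (Fin 2) R) ^ 2 - C (c ^ 2 * u)} :=
    Ideal.subset_span (Set.mem_insert_iff.mpr (Or.inr rfl))
  have hPm_prime := Stmt3Aux.P_prime u c d (-1) hc hε₁ hd_reg hirr
  have hPp_prime := Stmt3Aux.P_prime u c d 1 hc hε₂ hd_reg hirr
  have hIle : ∀ ε : R, Ideal.span {(X 0 : MvPolynomial (Fin 2) R) ^ 2 - C (d ^ 2 * u),
      (X 1 : MvPolynomial (Fin 2) R) ^ 2 - C (c ^ 2 * u)} ≤
      Ideal.span {(X 0 : MvPolynomial (Fin 2) R) ^ 2 - C (d ^ 2 * u),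
        (X 1 : MvPolynomial (Fin 2) R) ^ 2 - C (c ^ 2 * u),
        C d * X 1 - C (ε * c) * X 0,
        X 0 * X 1 - C (ε * (c * d * u))} := by
    intro ε
    apply Ideal.span_mono
    intro x hx
    simp only [Set.mem_insert_iff, Set.mem_singleton_iff] at hx ⊢
    tauto
  -- membership of the two "xy" generators
  have hg4m_mem : ∀ ε : R, (X 0 * X 1 - C (ε * (c * d * u)) : MvPolynomial (Fin 2) R) ∈
      Ideal.span {(X 0 : MvPolynomial (Fin 2) R) ^ 2 - C (d ^ 2 * u),
        (X 1 : MvPolynomial (Fin 2) R) ^ 2 - C (c ^ 2 * u),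
        C d * X 1 - C (ε * c) * X 0,
        X 0 * X 1 - C (ε * (c * d * u))} := fun ε =>
    Ideal.subset_span (Set.mem_insert_iff.mpr (Or.inr (Or.inr (Or.inr rfl))))
  -- if both ideals are comparable, 2 = 0
  have two_zero_m : Ideal.span {(X 0 : MvPolynomial (Fin 2) R) ^ 2 - C (d ^ 2 * u),
        (X 1 : MvPolynomial (Fin 2) R) ^ 2 - C (c ^ 2 * u),
        C d * X 1 - C ((1 : R) * c) * X 0,
        X 0 * X 1 - C ((1 : R) * (c * d * u))} ≤
      Ideal.span {(X 0 : MvPolynomial (Fin 2) R) ^ 2 - C (d ^ 2 * u),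
        (X 1 : MvPolynomial (Fin 2) R) ^ 2 - C (c ^ 2 * u),
        C d * X 1 - C ((-1 : R) * c) * X 0,
        X 0 * X 1 - C ((-1 : R) * (c * d * u))} → (2 : R) = 0 := by
    intro hle
    apply Stmt3Aux.two_eq_zero u c d (-1) hu hc hd hε₁ hd_reg
    have e : (C (2 * (c * d * u)) : MvPolynomial (Fin 2) R) =
        (X 0 * X 1 - C ((-1 : R) * (c * d * u))) -
          (X 0 * X 1 - C ((1 : R) * (c * d * u))) := by
      rw [show ((2 : R) * (c * d * u)) = (1 : R) * (c * d * u) - (-1 : R) * (c * d * u) by ring,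
        C_sub]
      ring
    rw [e]
    exact Ideal.sub_mem _ (hg4m_mem (-1)) (hle (hg4m_mem 1))
  have two_zero_p : Ideal.span {(X 0 : MvPolynomial (Fin 2) R) ^ 2 - C (d ^ 2 * u),
        (X 1 : MvPolynomial (Fin 2) R) ^ 2 - C (c ^ 2 * u),
        C d * X 1 - C ((-1 : R) * c) * X 0,
        X 0 * X 1 - C ((-1 : R) * (c * d * u))} ≤
      Ideal.span {(X 0 : MvPolynomial (Fin 2) R) ^ 2 - C (d ^ 2 * u),
        (X 1 : MvPolynomial (Fin 2) R) ^ 2 - C (c ^ 2 * u),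
        C d * X 1 - C ((1 : R) * c) * X 0,
        X 0 * X 1 - C ((1 : R) * (c * d * u))} → (2 : R) = 0 := by
    intro hle
    apply Stmt3Aux.two_eq_zero u c d 1 hu hc hd hε₂ hd_reg
    have e : (C (2 * (c * d * u)) : MvPolynomial (Fin 2) R) =
        (X 0 * X 1 - C ((-1 : R) * (c * d * u))) -
          (X 0 * X 1 - C ((1 : R) * (c * d * u))) := by
      rw [show ((2 : R) * (c * d * u)) = (1 : R) * (c * d * u) - (-1 : R) * (c * d * u) by ring,
        C_sub]
      ring
    rw [e]
    exact Ideal.sub_mem _ (hle (hg4m_mem (-1))) (hg4m_mem 1)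
  ext J
  simp only [Ideal.minimalPrimes, Set.mem_setOf_eq, Set.mem_insert_iff, Set.mem_singleton_iff]
  constructor
  · rintro ⟨⟨hJp, hIJ⟩, hmin⟩
    rcases Stmt3Aux.dichotomy u c d hJp (hIJ hf1I) (hIJ hf2I) with h | h
    · exact Or.inl (le_antisymm (hmin ⟨hPm_prime, hIle (-1)⟩ h) h)
    · exact Or.inr (le_antisymm (hmin ⟨hPp_prime, hIle 1⟩ h) h)
  · rintro (rfl | rfl)
    · refine ⟨⟨hPm_prime, hIle (-1)⟩, ?_⟩
      intro Q hQ hQle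
      rcases Stmt3Aux.dichotomy u c d hQ.1 (hQ.2 hf1I) (hQ.2 hf2I) with h | h
      · exact h
      · have h2 := two_zero_m (h.trans hQle)
        rw [Stmt3Aux.char2_eq u c d h2]
        exact h
    · refine ⟨⟨hPp_prime, hIle 1⟩, ?_⟩
      intro Q hQ hQle
      rcases Stmt3Aux.dichotomy u c d hQ.1 (hQ.2 hf1I) (hQ.2 hf2I) with h | h
      · have h2 := two_zero_p (h.trans hQle)
        rw [← Stmt3Aux.char2_eq u c d h2]
        exact h
      · exact h
end

section
/- Let R ⊆ S be a module-finite extension of noetherian commutative rings such that R is a unique factorization domain whose fraction field L has characteristic different from two. Suppose S is generated as an R-algebra by two elements s₁, s₂ ∈ S satisfying s₁² = a₁ and s₂² = a₂ for some a₁, a₂ ∈ R. Then the extension R ⊆ S splits. -/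
/-!
Choose a prime `Q` of `S` lying over `0` and let `K` be the fraction field of `S ⧸ Q`. It is
generated over `L = Frac R` by the images of `s₁` and `s₂`, so `[K : L]` divides `4` and is
invertible in `L`. The normalized trace `x ↦ Tr_{K/L}(x) / [K : L]`, pulled back to `S`, sends `1`
to `1` and every monomial `m` in `s₁, s₂` into `R`: since `m² ∈ R`, either the image of `m` lies in
`L`, where it is a square root of an element of `R` and hence lies in the integrally closed `R`, or
its minimal polynomial over `L` is `X² - m²` and its trace vanishes. The monomials span `S` over `R`.
-/

open Polynomial IntermediateField Module

section SquareRoot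

variable {F E : Type*} [Field F] [Field E] [Algebra F E] {x : E} {a : F}

theorem isIntegral_of_sq_eq_algebraMap (hx : x ^ 2 = algebraMap F E a) : IsIntegral F x :=
  .of_pow two_pos (hx ▸ isIntegral_algebraMap)

theorem minpoly_eq_X_sq_sub_C (hx : x ^ 2 = algebraMap F E a)
    (hxF : x ∉ (algebraMap F E).range) : minpoly F x = X ^ 2 - C a := by
  have hint := isIntegral_of_sq_eq_algebraMap hx
  refine (eq_of_monic_of_dvd_of_natDegree_le (minpoly.monic hint)
    (monic_X_pow_sub_C a two_ne_zero) (minpoly.dvd F x (by simp [hx])) ?_).symm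
  rw [natDegree_X_pow_sub_C]
  exact (minpoly.two_le_natDegree_iff hint).mpr hxF

theorem finrank_adjoin_simple_dvd_two (hx : x ^ 2 = algebraMap F E a) : finrank F F⟮x⟯ ∣ 2 := by
  rw [adjoin.finrank (isIntegral_of_sq_eq_algebraMap hx)]
  by_cases hxF : x ∈ (algebraMap F E).range
  · rw [minpoly.natDegree_eq_one_iff.mpr hxF]
    exact one_dvd 2
  · rw [minpoly_eq_X_sq_sub_C hx hxF, natDegree_X_pow_sub_C]

theorem Algebra.trace_eq_zero_of_sq_eq_algebraMap [FiniteDimensional F E]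
    (hx : x ^ 2 = algebraMap F E a) (hxF : x ∉ (algebraMap F E).range) :
    Algebra.trace F E x = 0 := by
  rw [trace_eq_finrank_mul_minpoly_nextCoeff, minpoly_eq_X_sq_sub_C hx hxF]
  simp [nextCoeff]

theorem finrank_dvd_four_of_adjoin_pair_eq_top {y : E} {b : F} (hx : x ^ 2 = algebraMap F E a)
    (hy : y ^ 2 = algebraMap F E b) (htop : F⟮x, y⟯ = ⊤) : finrank F E ∣ 4 := by
  have htop' : F⟮x⟯⟮y⟯ = ⊤ := by
    rw [← restrictScalars_eq_top_iff (K := F), adjoin_simple_adjoin_simple, htop]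
  have hy' : y ^ 2 = algebraMap F⟮x⟯ E (algebraMap F F⟮x⟯ b) := by
    rw [← IsScalarTower.algebraMap_apply, hy]
  rw [← Module.finrank_mul_finrank F F⟮x⟯ E, ← finrank_top' (F := F⟮x⟯) (E := E), ← htop']
  exact mul_dvd_mul (finrank_adjoin_simple_dvd_two hx) (finrank_adjoin_simple_dvd_two hy')

end SquareRoot

theorem natCast_ne_zero_of_dvd_four {L : Type*} [Semiring L] [NoZeroDivisors L] (h2 : (2 : L) ≠ 0)
    {n : ℕ} (hn : n ∣ 4) : (n : L) ≠ 0 := by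
  obtain ⟨k, hk⟩ := hn
  have h4 : (2 : L) * 2 = n * k := by exact_mod_cast congrArg (Nat.cast (R := L)) hk
  intro hn0
  rw [hn0, zero_mul] at h4
  exact mul_self_ne_zero.mpr h2 h4

theorem IsIntegrallyClosed.mem_range_of_sq_mem_range {R K : Type*} [CommRing R] [CommRing K]
    [Algebra R K] [IsFractionRing R K] [IsIntegrallyClosed R] {y : K}
    (hy : y ^ 2 ∈ (algebraMap R K).range) : y ∈ (algebraMap R K).range := by
  obtain ⟨c, hc⟩ := hy
  exact isIntegral_iff.mp (.of_pow two_pos (hc ▸ isIntegral_algebraMap))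

theorem sq_mem_range_of_mem_closure {R S : Type*} [CommRing R] [CommRing S] [Algebra R S]
    {T : Set S} (hT : ∀ s ∈ T, s ^ 2 ∈ (algebraMap R S).range) {s : S}
    (hs : s ∈ Submonoid.closure T) : s ^ 2 ∈ (algebraMap R S).range := by
  induction hs using Submonoid.closure_induction with
  | mem s hs => exact hT s hs
  | one => exact ⟨1, by simp⟩
  | mul x y _ _ hx hy => rw [mul_pow]; exact mul_mem hx hy

theorem exists_linearMap_eq_one_of_range_le {R L S : Type*} [CommRing R] [CommRing L]
    [Algebra R L] [AddCommMonoid S] [Module R S] (hinj : Function.Injective (algebraMap R L))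
    (ψ : S →ₗ[R] L) (hψ : LinearMap.range ψ ≤ LinearMap.range (Algebra.linearMap R L)) {s₀ : S}
    (hs₀ : ψ s₀ = 1) : ∃ ρ : S →ₗ[R] R, ρ s₀ = 1 := by
  let e := LinearEquiv.ofInjective (Algebra.linearMap R L) hinj
  refine ⟨e.symm.toLinearMap ∘ₗ ψ.codRestrict _ fun s ↦ hψ ⟨s, rfl⟩,
    e.symm_apply_eq.mpr (Subtype.ext ?_)⟩
  change ψ s₀ = algebraMap R L 1
  rw [hs₀, map_one]

section NormalizedTrace

variable {R L K : Type*} [CommRing R] [IsIntegrallyClosed R] [Field L] [Algebra R L]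
  [IsFractionRing R L] [Field K] [Algebra L K] [Algebra R K] [IsScalarTower R L K]
  [FiniteDimensional L K]

theorem inv_finrank_mul_trace_mem_range (hK : (finrank L K : L) ≠ 0) {x : K}
    (hx : x ^ 2 ∈ (algebraMap R K).range) :
    (finrank L K : L)⁻¹ * Algebra.trace L K x ∈ (algebraMap R L).range := by
  obtain ⟨c, hc⟩ := hx
  by_cases hxL : x ∈ (algebraMap L K).range
  · obtain ⟨y, rfl⟩ := hxL
    rw [Algebra.trace_algebraMap, nsmul_eq_mul, inv_mul_cancel_left₀ hK]
    refine IsIntegrallyClosed.mem_range_of_sq_mem_range ⟨c, ?_⟩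
    exact (algebraMap L K).injective (by rw [map_pow, ← hc, IsScalarTower.algebraMap_apply R L K])
  · rw [IsScalarTower.algebraMap_apply R L K] at hc
    rw [Algebra.trace_eq_zero_of_sq_eq_algebraMap hc.symm hxL, mul_zero]
    exact zero_mem _

theorem exists_retraction_of_algHom_to_field {S : Type*} [CommRing S] [Algebra R S]
    (hK : (finrank L K : L) ≠ 0) (f : S →ₐ[R] K) {T : Set S}
    (hT : ∀ s ∈ T, s ^ 2 ∈ (algebraMap R S).range) (hgen : Algebra.adjoin R T = ⊤) :
    ∃ ρ : S →ₗ[R] R, ρ 1 = 1 := by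
  let φ : K →ₗ[L] L := (finrank L K : L)⁻¹ • Algebra.trace L K
  have hspan : Submodule.span R (Submonoid.closure T : Set S) = ⊤ := by
    rw [← Algebra.adjoin_eq_span, hgen, Algebra.top_toSubmodule]
  refine exists_linearMap_eq_one_of_range_le (IsFractionRing.injective R L)
    (φ.restrictScalars R ∘ₗ f.toLinearMap) ?_ ?_
  · rw [LinearMap.range_eq_map, ← hspan, Submodule.map_span_le]
    intro s hs
    obtain ⟨c, hc⟩ := sq_mem_range_of_mem_closure hT hs
    exact inv_finrank_mul_trace_mem_range hK (x := f s) ⟨c, by rw [← map_pow, ← hc, f.commutes]⟩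
  · rw [LinearMap.comp_apply, AlgHom.toLinearMap_apply, map_one, ← map_one (algebraMap L K)]
    change (finrank L K : L)⁻¹ * Algebra.trace L K (algebraMap L K 1) = 1
    rw [Algebra.trace_algebraMap, nsmul_eq_mul, mul_one, inv_mul_cancel₀ hK]

end NormalizedTrace

theorem adjoin_image_eq_top_of_forall_eq_div {R S L K : Type*} [CommRing R] [CommRing S]
    [Algebra R S] [Field L] [Field K] [Algebra L K] [Algebra R K] [Algebra R L]
    [IsScalarTower R L K] {T : Set S} (hgen : Algebra.adjoin R T = ⊤) (f : S →ₐ[R] K)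
    (hf : ∀ z : K, ∃ s t, f s / f t = z) : IntermediateField.adjoin L (f '' T) = ⊤ := by
  have hle : Algebra.adjoin R (f '' T) ≤ (adjoin L (f '' T)).toSubalgebra.restrictScalars R :=
    Algebra.adjoin_le (subset_adjoin _ _)
  have hmem : ∀ s, f s ∈ adjoin L (f '' T) := fun s ↦
    hle (by rw [← AlgHom.map_adjoin, hgen]; exact ⟨s, trivial, rfl⟩)
  refine eq_top_iff.mpr fun z _ ↦ ?_
  obtain ⟨s, t, rfl⟩ := hf z
  exact div_mem (hmem s) (hmem t)

theorem faithfulSMul_fractionRing_quotient {R S : Type*} [CommRing R] [CommRing S] [Algebra R S]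
    {Q : Ideal S} [Q.IsPrime] (hQ : Q.comap (algebraMap R S) = ⊥) :
    FaithfulSMul R (FractionRing (S ⧸ Q)) := by
  have hinj : Function.Injective (algebraMap R (S ⧸ Q)) := by
    refine (injective_iff_map_eq_zero _).mpr fun r hr ↦ ?_
    rwa [← Ideal.mem_bot, ← hQ, Ideal.mem_comap, ← Ideal.Quotient.eq_zero_iff_mem]
  rw [faithfulSMul_iff_algebraMap_injective, IsScalarTower.algebraMap_eq R (S ⧸ Q)]
  exact (IsFractionRing.injective (S ⧸ Q) _).comp hinj

theorem stmt5_general (R S : Type) [CommRing R] [IsDomain R] [UniqueFactorizationMonoid R]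
    [CommRing S]
    [Algebra R S] (hinj : Function.Injective (algebraMap R S))
    [Module.Finite R S]
    (hchar : ringChar (FractionRing R) ≠ 2)
    (s₁ s₂ : S) (hgen : Algebra.adjoin R {s₁, s₂} = ⊤)
    (a₁ a₂ : R)
    (h₁ : s₁ ^ 2 = algebraMap R S a₁) (h₂ : s₂ ^ 2 = algebraMap R S a₂) :
    ∃ ρ : S →ₗ[R] R, ρ 1 = 1 := by
  have : Algebra.IsIntegral R S := .of_finite R S
  obtain ⟨Q, -, hQ, hQR⟩ := Ideal.exists_ideal_over_prime_of_isIntegral (S := S) ⊥ ⊥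
    (by rw [Ideal.comap_bot_of_injective _ hinj])
  set K := FractionRing (S ⧸ Q)
  have := faithfulSMul_fractionRing_quotient hQR
  let := FractionRing.liftAlgebra R K
  let f : S →ₐ[R] K := (IsScalarTower.toAlgHom R (S ⧸ Q) K).comp (Ideal.Quotient.mkₐ R Q)
  have htop : adjoin (FractionRing R) {f s₁, f s₂} = ⊤ := by
    refine Set.image_pair f s₁ s₂ ▸ adjoin_image_eq_top_of_forall_eq_div hgen f fun z ↦ ?_
    obtain ⟨x, y, -, rfl⟩ := IsFractionRing.div_surjective (S ⧸ Q) z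
    obtain ⟨s, rfl⟩ := Ideal.Quotient.mk_surjective x
    obtain ⟨t, rfl⟩ := Ideal.Quotient.mk_surjective y
    exact ⟨s, t, rfl⟩
  have hdvd : finrank (FractionRing R) K ∣ 4 := finrank_dvd_four_of_adjoin_pair_eq_top
    (by rw [← map_pow, h₁, f.commutes, IsScalarTower.algebraMap_apply R (FractionRing R) K])
    (by rw [← map_pow, h₂, f.commutes, IsScalarTower.algebraMap_apply R (FractionRing R) K]) htop
  have : FiniteDimensional (FractionRing R) K :=
    Module.finite_of_finrank_pos (Nat.pos_of_dvd_of_pos hdvd four_pos)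
  refine exists_retraction_of_algHom_to_field
    (natCast_ne_zero_of_dvd_four (Ring.two_ne_zero hchar) hdvd) f ?_ hgen
  rintro s (rfl | rfl)
  exacts [⟨a₁, h₁.symm⟩, ⟨a₂, h₂.symm⟩]

/-- **DSC for radical quadratic bi-generated extensions.**  Let `R ⊆ S` be a
module-finite extension of noetherian rings with `R` a UFD whose fraction field has
characteristic `≠ 2`.  If `S` is generated as an `R`-algebra by two elements
`s₁, s₂` satisfying `s₁² = a₁` and `s₂² = a₂` with `a₁, a₂ ∈ R`, then `R ⊆ S`
splits as a map of `R`-modules. -/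
theorem stmt5 (R S : Type) [CommRing R] [IsDomain R] [UniqueFactorizationMonoid R]
    [IsNoetherianRing R] [CommRing S] [IsNoetherianRing S]
    [Algebra R S] (hinj : Function.Injective (algebraMap R S))
    [Module.Finite R S]
    (hchar : ringChar (FractionRing R) ≠ 2)
    (s₁ s₂ : S) (hgen : Algebra.adjoin R {s₁, s₂} = ⊤)
    (a₁ a₂ : R)
    (h₁ : s₁ ^ 2 = algebraMap R S a₁) (h₂ : s₂ ^ 2 = algebraMap R S a₂) :
    ∃ ρ : S →ₗ[R] R, ρ 1 = 1 :=
  stmt5_general R S hinj hchar s₁ s₂ hgen a₁ a₂ h₁ h₂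
end

section
/- Let R ⊆ S be a module-finite extension of noetherian commutative rings such that R is a unique factorization domain whose fraction field L has characteristic different from two, and assume 2 is a unit in R. Suppose S is generated as an R-algebra by two elements s₁, s₂ ∈ S satisfying monic quadratic equations s₁² − a·s₁ + b = 0 and s₂² − c·s₂ + d = 0 for some a, b, c, d ∈ R. Then the extension R ⊆ S splits. -/
/-!
Let `L = Frac R` and let `K` be the residue field of a maximal ideal of `L ⊗[R] S`, which is
nonzero because `R → S` is injective and `L` is flat. Then `K` is generated over `L` by the images
of `s₁, s₂`, each a root of a quadratic, so `[K : L]` divides `4` and is a unit in `R`. As `R` is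
integrally closed, the normalized trace `s ↦ [K : L]⁻¹ Tr_{K/L}(s̄)` takes values in `R`, and it
is an `R`-linear retraction of `R → S`.
-/

open Module Polynomial IntermediateField TensorProduct

namespace IntermediateField

variable {F E : Type*} [Field F] [Field E] [Algebra F E]

theorem finrank_adjoin_simple_dvd_two {x : E} {a b : F}
    (hx : x ^ 2 - algebraMap F E a * x + algebraMap F E b = 0) : finrank F F⟮x⟯ ∣ 2 := by
  have hp : (X ^ 2 - C a * X + C b : F[X]).Monic := by monicity!
  have hpx : aeval x (X ^ 2 - C a * X + C b) = 0 := by simpa using hx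
  have hint : IsIntegral F x := ⟨_, hp, hpx⟩
  have hle : (minpoly F x).natDegree ≤ 2 := by
    have hdeg : (X ^ 2 - C a * X + C b : F[X]).degree = 2 := by compute_degree!
    exact natDegree_le_of_degree_le ((minpoly.min F x hp hpx).trans hdeg.le)
  have hpos := minpoly.natDegree_pos hint
  rw [adjoin.finrank hint]
  interval_cases (minpoly F x).natDegree <;> norm_num

theorem finrank_dvd_four_of_adjoin_pair_eq_top {x y : E} {a b c d : F}
    (hx : x ^ 2 - algebraMap F E a * x + algebraMap F E b = 0)
    (hy : y ^ 2 - algebraMap F E c * y + algebraMap F E d = 0)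
    (hgen : F⟮x, y⟯ = ⊤) : finrank F E ∣ 4 := by
  have htop : F⟮x⟯⟮y⟯ = ⊤ := by
    apply restrictScalars_injective F
    rw [adjoin_simple_adjoin_simple, hgen, restrictScalars_top]
  have hy' : y ^ 2 - algebraMap F⟮x⟯ E (algebraMap F F⟮x⟯ c) * y
      + algebraMap F⟮x⟯ E (algebraMap F F⟮x⟯ d) = 0 := by
    simpa only [← IsScalarTower.algebraMap_apply] using hy
  have hdvd : finrank F⟮x⟯ E ∣ 2 := by
    rw [← finrank_top', ← htop]
    exact finrank_adjoin_simple_dvd_two hy'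
  rw [← finrank_mul_finrank F F⟮x⟯ E]
  exact mul_dvd_mul (finrank_adjoin_simple_dvd_two hx) hdvd

end IntermediateField

theorem exists_linearMap_comp_eq_of_isIntegral {R L M : Type*} [CommRing R]
    [IsIntegrallyClosed R] [CommRing L] [Algebra R L] [IsFractionRing R L]
    [AddCommGroup M] [Module R M] (f : M →ₗ[R] L) (hf : ∀ m, IsIntegral R (f m)) :
    ∃ g : M →ₗ[R] R, Algebra.linearMap R L ∘ₗ g = f := by
  let e := LinearEquiv.ofInjective (Algebra.linearMap R L) (IsFractionRing.injective R L)
  have hrange : ∀ m, f m ∈ LinearMap.range (Algebra.linearMap R L) :=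
    fun m => IsIntegrallyClosed.isIntegral_iff.mp (hf m)
  refine ⟨e.symm.toLinearMap ∘ₗ f.codRestrict _ hrange, LinearMap.ext fun m => ?_⟩
  exact congrArg Subtype.val (e.apply_symm_apply _)

theorem exists_linearMap_apply_one_eq_one_of_algHom {R S L K : Type*} [CommRing R]
    [IsIntegrallyClosed R] [CommRing S] [Algebra R S] [Algebra.IsIntegral R S]
    [Field L] [Algebra R L] [IsFractionRing R L]
    [Field K] [Algebra L K] [Algebra R K] [IsScalarTower R L K] [FiniteDimensional L K]
    (π : S →ₐ[R] K) (hu : IsUnit (finrank L K : R)) : ∃ ρ : S →ₗ[R] R, ρ 1 = 1 := by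
  obtain ⟨v, hv⟩ := hu
  let τ : S →ₗ[R] L := (↑v⁻¹ : R) • ((Algebra.trace L K).restrictScalars R ∘ₗ π.toLinearMap)
  have hτ : ∀ s, IsIntegral R (τ s) := fun s =>
    (Algebra.isIntegral_trace ((Algebra.IsIntegral.isIntegral s).map π)).smul _
  obtain ⟨ρ, hρ⟩ := exists_linearMap_comp_eq_of_isIntegral τ hτ
  have htrace : Algebra.trace L K (π 1) = algebraMap R L v := by
    rw [map_one, ← map_one (algebraMap L K), Algebra.trace_algebraMap, hv, map_natCast,
      nsmul_one]
  refine ⟨ρ, IsFractionRing.injective R L ?_⟩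
  calc algebraMap R L (ρ 1) = τ 1 := LinearMap.congr_fun hρ 1
    _ = algebraMap R L (↑v⁻¹ * ↑v) := by
      simp only [τ, LinearMap.smul_apply, LinearMap.comp_apply, AlgHom.toLinearMap_apply,
        LinearMap.restrictScalars_apply, htrace, Algebra.smul_def, map_mul]
    _ = algebraMap R L 1 := by rw [Units.inv_mul]

theorem stmt6_general (R S : Type) [CommRing R] [IsDomain R] [UniqueFactorizationMonoid R]
    [CommRing S]
    [Algebra R S] (hinj : Function.Injective (algebraMap R S))
    [Module.Finite R S]
    (h2 : IsUnit (2 : R))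
    (s₁ s₂ : S) (hgen : Algebra.adjoin R {s₁, s₂} = ⊤)
    (a b c d : R)
    (h₁ : s₁ ^ 2 - algebraMap R S a * s₁ + algebraMap R S b = 0)
    (h₂ : s₂ ^ 2 - algebraMap R S c * s₂ + algebraMap R S d = 0) :
    ∃ ρ : S →ₗ[R] R, ρ 1 = 1 := by
  let L := FractionRing R
  have : Nontrivial (L ⊗[R] S) :=
    Algebra.TensorProduct.nontrivial_of_algebraMap_injective_of_flat_left R L S hinj
  obtain ⟨m, hm⟩ := Ideal.exists_maximal (L ⊗[R] S)
  let := Ideal.Quotient.field m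
  let π : S →ₐ[R] L ⊗[R] S ⧸ m :=
    ((Ideal.Quotient.mkₐ L m).restrictScalars R).comp Algebra.TensorProduct.includeRight
  have hπ : Algebra.adjoin L {π s₁, π s₂} = ⊤ := by
    rw [← (Algebra.map_top _).trans
      ((AlgHom.range_eq_top _).mpr (Ideal.Quotient.mkₐ_surjective L m)),
      ← Algebra.TensorProduct.adjoin_one_tmul_image_eq_top {s₁, s₂} hgen, AlgHom.map_adjoin,
      Set.image_image, Set.image_pair]
    rfl
  have hquad {s : S} {u v : R} (h : s ^ 2 - algebraMap R S u * s + algebraMap R S v = 0) :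
      π s ^ 2 - algebraMap L _ (algebraMap R L u) * π s + algebraMap L _ (algebraMap R L v) = 0 :=
    by simpa only [map_add, map_sub, map_mul, map_pow, AlgHom.commutes, map_zero,
      IsScalarTower.algebraMap_apply R L (L ⊗[R] S ⧸ m)] using congrArg π h
  have hdeg : finrank L (L ⊗[R] S ⧸ m) ∣ 4 :=
    finrank_dvd_four_of_adjoin_pair_eq_top (hquad h₁) (hquad h₂) (adjoin_eq_top_of_algebra L _ hπ)
  have h4 : IsUnit ((4 : ℕ) : R) := by simpa [show (4 : R) = 2 * 2 by norm_num] using h2.mul h2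
  exact exists_linearMap_apply_one_eq_one_of_algHom (L := L) π
    (isUnit_of_dvd_unit (Nat.cast_dvd_cast hdeg) h4)

/-- **DSC for quadratic bi-generated extensions when 2 is a unit.**  Let `R ⊆ S` be a
module-finite extension of noetherian rings with `R` a UFD whose fraction field has
characteristic `≠ 2`, and assume `2` is a unit in `R`.  If `S` is generated as an
`R`-algebra by two elements `s₁, s₂` satisfying monic quadratic equations
`s₁² − a·s₁ + b = 0` and `s₂² − c·s₂ + d = 0` with `a, b, c, d ∈ R`, then `R ⊆ S`
splits as a map of `R`-modules. -/
theorem stmt6 (R S : Type) [CommRing R] [IsDomain R] [UniqueFactorizationMonoid R]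
    [IsNoetherianRing R] [CommRing S] [IsNoetherianRing S]
    [Algebra R S] (hinj : Function.Injective (algebraMap R S))
    [Module.Finite R S]
    (hchar : ringChar (FractionRing R) ≠ 2)
    (h2 : IsUnit (2 : R))
    (s₁ s₂ : S) (hgen : Algebra.adjoin R {s₁, s₂} = ⊤)
    (a b c d : R)
    (h₁ : s₁ ^ 2 - algebraMap R S a * s₁ + algebraMap R S b = 0)
    (h₂ : s₂ ^ 2 - algebraMap R S c * s₂ + algebraMap R S d = 0) :
    ∃ ρ : S →ₗ[R] R, ρ 1 = 1 :=
  stmt6_general R S hinj h2 s₁ s₂ hgen a b c d h₁ h₂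
end

section
/- Let (R, m) ⊆ (T, n) be a module-finite extension of commutative noetherian local rings such that T is a free R-module. Assume that the zero-dimensional local ring T/mT is Gorenstein, i.e., its socle Ann_{T/mT}(n·(T/mT)) is a one-dimensional vector space over the residue field T/n. Then for any ideal J ⊆ T, there exists a retraction ρ : T/J → R (an R-module homomorphism with ρ(1) = 1) if and only if Ann_T(J) is not contained in mT. -/
/-!
Write `mT` for the extension of the maximal ideal of `R`. Lift a generator of the socle of
`T/mT` to `u ∈ T` and, `T` being free, pick `ψ : T → R` with `ψ u = 1`. In the artinian local
ring `T/mT` every nonzero ideal contains the socle, so for `z ∉ mT` some `t` has `z t ≡ u`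
modulo `mT`: the pairing `(z, t) ↦ ψ (z t)` is nondegenerate modulo `m`, and by Nakayama
`z ↦ ψ (z ·)` is an isomorphism `T ≅ Hom_R(T, R)`. A retraction `ρ` is a functional killing
`J` with value `1` at `1`; it is `ψ (z ·)` for some `z`, which then kills `J` and has
`ψ z = 1`, so `z ∉ mT`. Conversely, for `z ∈ Ann_T(J) \ mT` a functional `f` with `f z = 1`
gives the retraction `t ↦ f (z t)`.
-/

open IsLocalRing

theorem LinearMap.apply_mem_of_mem_smul_top {R M : Type*} [CommRing R] [AddCommGroup M]
    [Module R M] {I : Ideal R} (f : M →ₗ[R] R) {x : M}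
    (hx : x ∈ I • (⊤ : Submodule R M)) : f x ∈ I := by
  simpa using Submodule.smul_top_le_comap_smul_top I f hx

theorem Ideal.mem_smul_top_iff_mem_map {R T : Type*} [CommRing R] [CommRing T] [Algebra R T]
    {I : Ideal R} {x : T} : x ∈ I • (⊤ : Submodule R T) ↔ x ∈ I.map (algebraMap R T) := by
  rw [Ideal.smul_top_eq_map]
  rfl

theorem IsLocalRing.exists_dual_apply_eq_one {R M : Type*} [CommRing R] [IsLocalRing R]
    [AddCommGroup M] [Module R M] [Module.Free R M] {x : M}
    (hx : x ∉ maximalIdeal R • (⊤ : Submodule R M)) : ∃ f : Module.Dual R M, f x = 1 := by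
  let b := Module.Free.chooseBasis R M
  by_contra! h
  have hcoord : ∀ i, b.repr x i ∈ maximalIdeal R := by
    intro i
    by_contra hi
    obtain ⟨u, hu⟩ := IsLocalRing.notMem_maximalIdeal.mp hi
    exact h (u⁻¹ • b.coord i) (by simp [← hu, Units.smul_def])
  apply hx
  rw [← b.linearCombination_repr x, Finsupp.linearCombination_apply]
  exact Submodule.finsuppSum_mem _ _ _ _ fun i _ ↦ Submodule.smul_mem_smul (hcoord i) trivial

theorem IsLocalRing.surjective_of_comap_smul_top_le {R M : Type*} [CommRing R] [IsLocalRing R]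
    [AddCommGroup M] [Module R M] [Module.Finite R M] (f : M →ₗ[R] M)
    (hf : (maximalIdeal R • ⊤ : Submodule R M).comap f ≤ maximalIdeal R • ⊤) :
    Function.Surjective f := by
  let N : Submodule R M := maximalIdeal R • ⊤
  have hN : N ≤ N.comap f := Submodule.smul_top_le_comap_smul_top _ f
  let g := N.mapQ N f hN
  have hg : Function.Injective g := by
    rw [← LinearMap.ker_eq_bot, Submodule.ker_mapQ, le_antisymm hf hN, Submodule.mkQ_map_self]
  let _ := Ideal.Quotient.field (maximalIdeal R)
  have : Module.Finite (R ⧸ maximalIdeal R) (M ⧸ N) :=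
    Module.Finite.of_restrictScalars_finite R _ _
  -- `g` is linear over the residue field, where injective endomorphisms are surjective.
  let gk : (M ⧸ N) →ₗ[R ⧸ maximalIdeal R] M ⧸ N :=
    { toFun := g, map_add' := g.map_add, map_smul' := by rintro ⟨c⟩ x; exact g.map_smul c x }
  have hgk : Function.Surjective gk := LinearMap.injective_iff_surjective.mp hg
  rw [← LinearMap.range_eq_top, ← IsLocalRing.map_mkQ_eq_top, ← Submodule.range_mapQ N N f hN]
  exact LinearMap.range_eq_top.mpr hgk

theorem LinearMap.bijective_of_forall_exists_apply_notMem {R M : Type*} [CommRing R]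
    [IsLocalRing R] [AddCommGroup M] [Module R M] [Module.Finite R M] [Module.Free R M]
    (B : M →ₗ[R] Module.Dual R M)
    (hB : ∀ x ∉ maximalIdeal R • (⊤ : Submodule R M), ∃ y, B x y ∉ maximalIdeal R) :
    Function.Bijective B := by
  classical
  let e := (Module.Free.chooseBasis R M).toDualEquiv
  have hf : Function.Surjective (e.symm.toLinearMap ∘ₗ B) := by
    refine IsLocalRing.surjective_of_comap_smul_top_le _ fun x hx ↦ ?_
    by_contra hxm
    obtain ⟨y, hy⟩ := hB x hxm
    have hBx : B x ∈ maximalIdeal R • (⊤ : Submodule R (Module.Dual R M)) := by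
      simpa using Submodule.smul_top_le_comap_smul_top _ e.toLinearMap hx
    exact hy ((Module.Dual.eval R M y).apply_mem_of_mem_smul_top hBx)
  have hB_surj : Function.Surjective B := by
    simpa using e.surjective.comp hf
  exact ⟨OrzechProperty.injective_of_surjective_of_injective e.toLinearMap B e.injective hB_surj,
    hB_surj⟩

theorem IsArtinianRing.exists_ne_zero_forall_maximalIdeal_smul_eq_zero {A M : Type*}
    [CommRing A] [IsArtinianRing A] [IsLocalRing A] [AddCommGroup M] [Module A M]
    [Nontrivial M] : ∃ y : M, y ≠ 0 ∧ ∀ x ∈ maximalIdeal A, x • y = 0 := by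
  obtain ⟨P, hP⟩ := associatedPrimes.nonempty A M
  obtain ⟨hPprime, y, rfl⟩ := isAssociatedPrime_iff.mp hP
  have hPmax : (⊥ : Submodule A M).colon {y} = maximalIdeal A :=
    IsLocalRing.eq_maximalIdeal (IsArtinianRing.isMaximal_of_isPrime _)
  refine ⟨y, ?_, fun x hx ↦ ?_⟩
  · rintro rfl
    exact hPprime.ne_top (by simp)
  · rw [← hPmax, Submodule.mem_colon_singleton] at hx
    simpa using hx

theorem IsArtinianRing.mem_span_singleton_of_annihilator_maximalIdeal_eq {A : Type*}
    [CommRing A] [IsArtinianRing A] [IsLocalRing A] {s : A}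
    (hs : Submodule.annihilator (maximalIdeal A) = Ideal.span {s}) {a : A} (ha : a ≠ 0) :
    s ∈ Ideal.span {a} := by
  have : Nontrivial (Ideal.span {a}) :=
    ⟨⟨⟨a, Ideal.mem_span_singleton_self a⟩, 0, by simpa using ha⟩⟩
  obtain ⟨⟨y, hya⟩, hy0, hy⟩ :=
    exists_ne_zero_forall_maximalIdeal_smul_eq_zero (A := A) (M := Ideal.span {a})
  have hy_ann : y ∈ Submodule.annihilator (maximalIdeal A) :=
    Submodule.mem_annihilator.mpr fun x hx ↦ by
      simpa [mul_comm] using congrArg Subtype.val (hy x hx)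
  obtain ⟨c, rfl⟩ := Ideal.mem_span_singleton'.mp (hs ▸ hy_ann)
  have hs_ann : s ∈ Submodule.annihilator (maximalIdeal A) :=
    hs ▸ Ideal.mem_span_singleton_self s
  obtain ⟨u, rfl⟩ : IsUnit c := by
    by_contra hc
    apply hy0
    simpa [mul_comm] using Submodule.mem_annihilator.mp hs_ann c ((mem_maximalIdeal c).mpr hc)
  simpa using Ideal.mul_mem_left _ (↑u⁻¹ : A) hya

theorem isArtinianRing_quotient_map_maximalIdeal {R T : Type*} [CommRing R] [IsLocalRing R]
    [CommRing T] [Algebra R T] [Module.Finite R T] :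
    IsArtinianRing (T ⧸ (maximalIdeal R).map (algebraMap R T)) :=
  let _ := Ideal.Quotient.field (maximalIdeal R)
  have : Module.Finite (R ⧸ maximalIdeal R) (T ⧸ (maximalIdeal R).map (algebraMap R T)) :=
    Module.Finite.of_restrictScalars_finite R _ _
  IsArtinianRing.of_finite (R ⧸ maximalIdeal R) _

theorem exists_dual_forall_exists_apply_mul_notMem {R T : Type*} [CommRing R] [IsLocalRing R]
    [CommRing T] [Algebra R T] [Module.Free R T]
    {s : T ⧸ (maximalIdeal R).map (algebraMap R T)} (hs : s ≠ 0)
    (hmem : ∀ a, a ≠ 0 → s ∈ Ideal.span {a}) :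
    ∃ ψ : Module.Dual R T,
      ∀ z ∉ maximalIdeal R • (⊤ : Submodule R T), ∃ t, ψ (z * t) ∉ maximalIdeal R := by
  have hmk : ∀ x : T, x ∈ maximalIdeal R • (⊤ : Submodule R T) ↔
      Ideal.Quotient.mk ((maximalIdeal R).map (algebraMap R T)) x = 0 :=
    fun x ↦ by rw [Ideal.mem_smul_top_iff_mem_map, Ideal.Quotient.eq_zero_iff_mem]
  obtain ⟨u, rfl⟩ := Ideal.Quotient.mk_surjective s
  obtain ⟨ψ, hψ⟩ := exists_dual_apply_eq_one ((hmk u).not.mpr hs)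
  refine ⟨ψ, fun z hz ↦ ?_⟩
  obtain ⟨c, hc⟩ := Ideal.mem_span_singleton'.mp (hmem _ ((hmk z).not.mp hz))
  obtain ⟨t, rfl⟩ := Ideal.Quotient.mk_surjective c
  refine ⟨t, fun hzt ↦ ?_⟩
  have hdiff : u - z * t ∈ maximalIdeal R • (⊤ : Submodule R T) :=
    (hmk _).mpr (by rw [map_sub, map_mul, mul_comm, hc, sub_self])
  have h1 := add_mem (ψ.apply_mem_of_mem_smul_top hdiff) hzt
  rw [map_sub, hψ, sub_add_cancel] at h1
  exact (maximalIdeal R).one_notMem h1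

theorem exists_retraction_of_not_annihilator_le {R T : Type*} [CommRing R] [IsLocalRing R]
    [CommRing T] [Algebra R T] [Module.Free R T] (J : Ideal T)
    (h : ¬ Submodule.annihilator J ≤ (maximalIdeal R).map (algebraMap R T)) :
    ∃ ρ : (T ⧸ J) →ₗ[R] R, ρ 1 = 1 := by
  obtain ⟨z, hzJ, hzm⟩ := SetLike.not_le_iff_exists.mp h
  obtain ⟨f, hf⟩ :=
    exists_dual_apply_eq_one (M := T) fun h ↦ hzm (Ideal.mem_smul_top_iff_mem_map.mp h)
  let μ : (T ⧸ J) →ₗ[T] T :=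
    J.liftQ (LinearMap.mul T T z) fun x hx ↦ Submodule.mem_annihilator.mp hzJ x hx
  refine ⟨f ∘ₗ μ.restrictScalars R, ?_⟩
  have hμ : μ 1 = z := mul_one z
  simp only [LinearMap.comp_apply, LinearMap.restrictScalars_apply, hμ, hf]

theorem not_annihilator_le_of_retraction {R T : Type*} [CommRing R] [IsLocalRing R]
    [CommRing T] [Algebra R T] (ψ : Module.Dual R T)
    (hψ : Function.Bijective ((LinearMap.mul R T).compr₂ ψ)) (J : Ideal T)
    (ρ : (T ⧸ J) →ₗ[R] R) (hρ : ρ 1 = 1) :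
    ¬ Submodule.annihilator J ≤ (maximalIdeal R).map (algebraMap R T) := by
  intro hle
  obtain ⟨z, hz⟩ := hψ.2 (ρ ∘ₗ (Ideal.Quotient.mkₐ R J).toLinearMap)
  have hzψ : ∀ t, ψ (z * t) = ρ (Ideal.Quotient.mk J t) := fun t ↦ LinearMap.congr_fun hz t
  have hzJ : z ∈ Submodule.annihilator J := by
    refine Submodule.mem_annihilator.mpr fun j hj ↦ hψ.1 (LinearMap.ext fun t ↦ ?_)
    simp [mul_assoc, hzψ, Ideal.Quotient.eq_zero_iff_mem.mpr (J.mul_mem_right t hj)]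
  have hψz := ψ.apply_mem_of_mem_smul_top (Ideal.mem_smul_top_iff_mem_map.mpr (hle hzJ))
  rw [← mul_one z, hzψ, map_one, hρ] at hψz
  exact (maximalIdeal R).one_notMem hψz

theorem stmt12_general (R T : Type) [CommRing R] [IsLocalRing R] [CommRing T] [IsLocalRing T]
    [Algebra R T] [Module.Finite R T] [Module.Free R T]
    -- the socle of `T/mT` is a one-dimensional `T/n`-vector space: it has a nonzero
    -- element `s` of which every element of the socle is a multiple
    (hGor : ∃ s : T ⧸ (IsLocalRing.maximalIdeal R).map (algebraMap R T),
      (∀ x ∈ IsLocalRing.maximalIdeal T,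
        Ideal.Quotient.mk ((IsLocalRing.maximalIdeal R).map (algebraMap R T)) x * s = 0) ∧
      s ≠ 0 ∧
      ∀ t : T ⧸ (IsLocalRing.maximalIdeal R).map (algebraMap R T),
        (∀ x ∈ IsLocalRing.maximalIdeal T,
          Ideal.Quotient.mk ((IsLocalRing.maximalIdeal R).map (algebraMap R T)) x * t = 0) →
        ∃ r : T,
          t = Ideal.Quotient.mk ((IsLocalRing.maximalIdeal R).map (algebraMap R T)) r * s)
    (J : Ideal T) :
    (∃ ρ : (T ⧸ J) →ₗ[R] R, ρ 1 = 1) ↔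
      ¬ (Submodule.annihilator J ≤ (IsLocalRing.maximalIdeal R).map (algebraMap R T)) := by
  obtain ⟨s, hs_socle, hs_ne, hs_gen⟩ := hGor
  let π := Ideal.Quotient.mk ((maximalIdeal R).map (algebraMap R T))
  have : Nontrivial (T ⧸ (maximalIdeal R).map (algebraMap R T)) := ⟨⟨s, 0, hs_ne⟩⟩
  have : IsLocalRing (T ⧸ (maximalIdeal R).map (algebraMap R T)) :=
    .of_surjective' π Ideal.Quotient.mk_surjective
  have := isArtinianRing_quotient_map_maximalIdeal (R := R) (T := T)
  have hsocle : Submodule.annihilator (maximalIdeal (T ⧸ (maximalIdeal R).map (algebraMap R T))) =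
      Ideal.span {s} := by
    rw [← map_maximalIdeal_of_surjective π Ideal.Quotient.mk_surjective]
    ext t
    simp only [Submodule.mem_annihilator, smul_eq_mul, Ideal.mem_span_singleton',
      Ideal.mem_map_iff_of_surjective π Ideal.Quotient.mk_surjective]
    constructor
    · intro ht
      obtain ⟨r, hr⟩ := hs_gen t fun x hx ↦ mul_comm (π x) t ▸ ht _ ⟨x, hx, rfl⟩
      exact ⟨_, hr.symm⟩
    · rintro ⟨a, rfl⟩ _ ⟨x, hx, rfl⟩
      linear_combination a * hs_socle x hx
  obtain ⟨ψ, hψ⟩ := exists_dual_forall_exists_apply_mul_notMem hs_ne fun a ha ↦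
    IsArtinianRing.mem_span_singleton_of_annihilator_maximalIdeal_eq hsocle ha
  have hB := LinearMap.bijective_of_forall_exists_apply_notMem ((LinearMap.mul R T).compr₂ ψ) hψ
  exact ⟨fun ⟨ρ, hρ⟩ ↦ not_annihilator_le_of_retraction ψ hB J ρ hρ,
    exists_retraction_of_not_annihilator_le J⟩

/-- Let `(R, m) ⊆ (T, n)` be a module-finite extension of noetherian local rings with
`T` free as an `R`-module, and suppose the socle `Ann_{T/mT}(n·(T/mT))` of the
zero-dimensional local ring `T/mT` is a one-dimensional vector space over the residue
field `T/n`.  Then for any ideal `J ⊆ T` there is a retraction `ρ : T/J → R`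
(an `R`-linear map with `ρ(1) = 1`) iff `Ann_T(J) ⊄ mT`. -/
theorem stmt12 (R T : Type) [CommRing R] [IsNoetherianRing R] [IsLocalRing R]
    [CommRing T] [IsNoetherianRing T] [IsLocalRing T]
    [Algebra R T] (hinj : Function.Injective (algebraMap R T))
    [Module.Finite R T] [Module.Free R T]
    -- the socle of `T/mT` is a one-dimensional `T/n`-vector space: it has a nonzero
    -- element `s` of which every element of the socle is a multiple
    (hGor : ∃ s : T ⧸ (IsLocalRing.maximalIdeal R).map (algebraMap R T),
      (∀ x ∈ IsLocalRing.maximalIdeal T,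
        Ideal.Quotient.mk ((IsLocalRing.maximalIdeal R).map (algebraMap R T)) x * s = 0) ∧
      s ≠ 0 ∧
      ∀ t : T ⧸ (IsLocalRing.maximalIdeal R).map (algebraMap R T),
        (∀ x ∈ IsLocalRing.maximalIdeal T,
          Ideal.Quotient.mk ((IsLocalRing.maximalIdeal R).map (algebraMap R T)) x * t = 0) →
        ∃ r : T,
          t = Ideal.Quotient.mk ((IsLocalRing.maximalIdeal R).map (algebraMap R T)) r * s)
    (J : Ideal T) :
    (∃ ρ : (T ⧸ J) →ₗ[R] R, ρ 1 = 1) ↔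
      ¬ (Submodule.annihilator J ≤ (IsLocalRing.maximalIdeal R).map (algebraMap R T)) :=
  stmt12_general R T hGor J
end

section
/- Let R be a unique factorization domain and let R ⊆ S be a module-finite extension of commutative rings such that S is generated as an R-algebra by a single element. Then the extension R ⊆ S splits, i.e., there exists an R-module homomorphism ρ : S → R with ρ(1) = 1. -/
open Polynomial
open scoped TensorProduct

/-!
Write `S = R[X] / I` with `I` the kernel of `X ↦ s`. Over `K = Frac R`, the minimal polynomial
of `1 ⊗ s ∈ K ⊗[R] S` divides every element of `I`; it has positive degree because
`K ⊗[R] S ≠ 0` (flatness of `K` and `R ↪ S`), and since it divides a monic polynomial over `R`,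
Gauss's lemma puts it in `R[X]`. Hence `S` surjects onto `R[X] / (g)` for a monic `g` of positive
degree, and the coordinate of `1` in the basis `1, X, …, X^(deg g - 1)` is the splitting.
-/

theorem PowerBasis.exists_linearMap_map_one_eq_one {R T : Type*} [CommRing R] [Ring T]
    [Algebra R T] (pb : PowerBasis R T) (hdim : 0 < pb.dim) :
    ∃ ρ : T →ₗ[R] R, ρ 1 = 1 := by
  refine ⟨pb.basis.coord ⟨0, hdim⟩, ?_⟩
  have h1 : pb.basis ⟨0, hdim⟩ = 1 := by rw [pb.basis_eq_pow, pow_zero]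
  rw [← h1, Module.Basis.coord_apply, Module.Basis.repr_self, Finsupp.single_eq_same]

theorem exists_monic_ker_aeval_le_span {R S : Type*} [CommRing R] [IsDomain R]
    [IsIntegrallyClosed R] [CommRing S] [Algebra R S]
    (hinj : Function.Injective (algebraMap R S)) {s : S} (hs : IsIntegral R s) :
    ∃ g : R[X], g.Monic ∧ 0 < g.natDegree ∧
      RingHom.ker (aeval s : R[X] →ₐ[R] S) ≤ Ideal.span {g} := by
  have hK : Function.Injective (algebraMap R (FractionRing R)) :=
    IsFractionRing.injective R (FractionRing R)
  have : Nontrivial (FractionRing R ⊗[R] S) :=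
    Algebra.TensorProduct.nontrivial_of_algebraMap_injective_of_flat_left R _ S hinj
  let ι : S →ₐ[R] FractionRing R ⊗[R] S := Algebra.TensorProduct.includeRight
  set s' := ι s
  have hs' : IsIntegral (FractionRing R) s' := (hs.map ι).tower_top
  have aeval_s' (p : R[X]) :
      aeval s' (p.map (algebraMap R (FractionRing R))) = ι (aeval s p) := by
    rw [aeval_map_algebraMap, aeval_algHom_apply]
  obtain ⟨f, hf, hfs⟩ := hs
  have hdvd_f : minpoly (FractionRing R) s' ∣ f.map (algebraMap R (FractionRing R)) :=
    minpoly.dvd (FractionRing R) s' (by rw [aeval_s', aeval_def, hfs, map_zero])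
  obtain ⟨g, hg⟩ := IsIntegrallyClosed.eq_map_mul_C_of_dvd (FractionRing R) hf hdvd_f
  rw [(minpoly.monic hs').leadingCoeff, C_1, mul_one] at hg
  have hgm : g.Monic := monic_of_injective hK (hg ▸ minpoly.monic hs')
  refine ⟨g, hgm, ?_, fun p hp => ?_⟩
  · rw [← natDegree_map_eq_of_injective hK, hg]
    exact minpoly.natDegree_pos hs'
  · rw [Ideal.mem_span_singleton, ← map_dvd_map _ hK hgm, hg]
    exact minpoly.dvd (FractionRing R) s' (by rw [aeval_s', RingHom.mem_ker.mp hp, map_zero])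

/-- Let `R` be a UFD and `R ⊆ S` a module-finite extension such that `S` is generated
as an `R`-algebra by a single element.  Then `R ⊆ S` splits: there is an `R`-linear
map `ρ : S → R` with `ρ(1) = 1`. -/
theorem stmt14 (R S : Type) [CommRing R] [IsDomain R] [UniqueFactorizationMonoid R]
    [CommRing S] [Algebra R S] (hinj : Function.Injective (algebraMap R S))
    [Module.Finite R S]
    (hgen : ∃ s : S, Algebra.adjoin R {s} = ⊤) :
    ∃ ρ : S →ₗ[R] R, ρ 1 = 1 := by
  obtain ⟨s, hs⟩ := hgen
  have hsurj : Function.Surjective (aeval s : R[X] →ₐ[R] S) := by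
    rw [← AlgHom.range_eq_top, ← Algebra.adjoin_singleton_eq_range_aeval, hs]
  obtain ⟨g, hgm, hdeg, hker⟩ :=
    exists_monic_ker_aeval_le_span hinj (Algebra.IsIntegral.isIntegral (R := R) s)
  obtain ⟨ρ, hρ⟩ := (AdjoinRoot.powerBasis' hgm).exists_linearMap_map_one_eq_one hdeg
  let π : S →ₐ[R] AdjoinRoot g :=
    (Ideal.Quotient.factorₐ R hker).comp (Ideal.quotientKerAlgEquivOfSurjective hsurj).symm
  exact ⟨ρ ∘ₗ π.toLinearMap, by simp [hρ]⟩
end
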